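/- arXiv:2309.13816 — 8 statements merged into one kernel-verified Lean document; each statement's English description precedes it below -/
import Mathlib

section
/- The reformulation (R_ρ) is always feasible: for every x ∈ ℝⁿ the point (x, |h(x)|, max{0,−g(x)}) is feasible for (R_ρ). Moreover, at every feasible point (x,y,z) of (R_ρ) and for every Δx ∈ ℝⁿ there exist Δy ∈ ℝ^{mE} and Δz ∈ ℝ^{mI} such that Δy − ∇h(x)ᵀΔx > 0, Δy + ∇h(x)ᵀΔx > 0, Δz + ∇g(x)ᵀΔx > 0 and Δz > 0 componentwise; in particular the Mangasarian–Fromowitz constraint qualification holds at every feasible point of (R_ρ). -/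
open RealInnerProductSpace

/-- The reformulation (R_ρ) is always feasible: for every `x`, the point
`(x, |h(x)|, max{0,−g(x)})` is feasible.  Moreover at every feasible point `(x,y,z)`
and every `Δx` there are `Δy, Δz` with `Δy − ∇h(x)ᵀΔx > 0`, `Δy + ∇h(x)ᵀΔx > 0`,
`Δz + ∇g(x)ᵀΔx > 0`, `Δz > 0` componentwise (MFCQ holds at every feasible point). -/
theorem stmt2 {n mE mI : ℕ}
    (f : EuclideanSpace ℝ (Fin n) → ℝ)
    (h : Fin mE → EuclideanSpace ℝ (Fin n) → ℝ)
    (g : Fin mI → EuclideanSpace ℝ (Fin n) → ℝ)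
    (hf : ContDiff ℝ 1 f) (hh : ∀ i, ContDiff ℝ 1 (h i)) (hg : ∀ i, ContDiff ℝ 1 (g i))
    (ρ : ℝ) (hρ : 0 < ρ) :
    (∀ x : EuclideanSpace ℝ (Fin n),
      (∀ i, 0 ≤ |h i x| - h i x) ∧ (∀ i, 0 ≤ |h i x| + h i x) ∧
      (∀ i, 0 ≤ max 0 (-(g i x)) + g i x) ∧ (∀ i, 0 ≤ max 0 (-(g i x)))) ∧
    (∀ (x : EuclideanSpace ℝ (Fin n)) (y : Fin mE → ℝ) (z : Fin mI → ℝ),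
      ((∀ i, 0 ≤ y i - h i x) ∧ (∀ i, 0 ≤ y i + h i x) ∧
       (∀ i, 0 ≤ z i + g i x) ∧ (∀ i, 0 ≤ z i)) →
      ∀ Δx : EuclideanSpace ℝ (Fin n), ∃ (Δy : Fin mE → ℝ) (Δz : Fin mI → ℝ),
        (∀ i, 0 < Δy i - ⟪gradient (h i) x, Δx⟫) ∧
        (∀ i, 0 < Δy i + ⟪gradient (h i) x, Δx⟫) ∧
        (∀ i, 0 < Δz i + ⟪gradient (g i) x, Δx⟫) ∧
        (∀ i, 0 < Δz i)) := by
  constructor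
  · intro x
    refine ⟨fun i => by simpa using le_abs_self (h i x),
      fun i => by have := neg_abs_le (h i x); linarith, fun i => ?_, fun i => le_max_left _ _⟩
    rcases le_or_gt 0 (g i x) with hi | hi
    · positivity
    · simp [max_eq_right (by linarith : (0:ℝ) ≤ -(g i x))]
  · intro x y z _ Δx
    refine ⟨fun i => |⟪gradient (h i) x, Δx⟫| + 1, fun i => |⟪gradient (g i) x, Δx⟫| + 1,
      fun i => ?_, fun i => ?_, fun i => ?_, fun i => by positivity⟩ <;> dsimp only
    · have := le_abs_self ⟪gradient (h i) x, Δx⟫; linarith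
    · have := neg_abs_le ⟪gradient (h i) x, Δx⟫; linarith
    · have := neg_abs_le ⟪gradient (g i) x, Δx⟫; linarith
end

section
/- Let (x̂,ŷ,ẑ) be a feasible point of (R_ρ) and suppose that the vectors {∇h_i(x̂) : h_i(x̂)=0} ∪ {∇g_i(x̂) : g_i(x̂)=0} are linearly independent in ℝⁿ. Then the gradients, with respect to (x,y,z) ∈ ℝ^{n+mE+mI}, of the constraints of (R_ρ) active at (x̂,ŷ,ẑ) — namely the vectors (−∇h_i(x̂), e_i, 0) for each i with ŷ_i = h_i(x̂), (∇h_i(x̂), e_i, 0) for each i with ŷ_i = −h_i(x̂), (∇g_i(x̂), 0, e_i) for each i with ẑ_i = −g_i(x̂), and (0, 0, e_i) for each i with ẑ_i = 0 — form a linearly independent family; i.e., LICQ holds at (x̂,ŷ,ẑ) for (R_ρ). -/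
open RealInnerProductSpace

lemma sum_subtype_smul {m : ℕ} {V : Type*} [AddCommGroup V] [Module ℝ V]
    (P : Fin m → Prop) [DecidablePred P] (c : {i : Fin m // P i} → ℝ) (v : Fin m → V) :
    ∑ a : {i : Fin m // P i}, c a • v a.1
      = ∑ k, (if hk : P k then c ⟨k, hk⟩ else 0) • v k := by
  calc ∑ a : {i : Fin m // P i}, c a • v a.1
      = ∑ a : {i : Fin m // P i}, (if hk : P a.1 then c ⟨a.1, hk⟩ else 0) • v a.1 :=
        Finset.sum_congr rfl (fun a _ => by rw [dif_pos a.2])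
    _ = ∑ k ∈ Finset.univ.filter P, (if hk : P k then c ⟨k, hk⟩ else 0) • v k :=
        (Finset.sum_subtype _ (by simp) (fun k => (if hk : P k then c ⟨k, hk⟩ else 0) • v k)).symm
    _ = ∑ k, (if hk : P k then c ⟨k, hk⟩ else 0) • v k := by
        apply Finset.sum_filter_of_ne
        intro k _ hk
        by_contra hP
        simp [dif_neg hP] at hk

lemma sum_subtype_smul' {m : ℕ} {V : Type*} [AddCommGroup V] [Module ℝ V]
    (P : Fin m → Prop) [DecidablePred P] (e : Fin m → ℝ) (v : Fin m → V)
    (he : ∀ k, ¬ P k → e k = 0) :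
    ∑ a : {i : Fin m // P i}, e a.1 • v a.1 = ∑ k, e k • v k := by
  rw [sum_subtype_smul P (fun a => e a.1) v]
  refine Finset.sum_congr rfl (fun k _ => ?_)
  split_ifs with hk
  · rfl
  · rw [he k hk]

lemma aux_coeffs {mE mI : ℕ} {V : Type*} [AddCommGroup V] [Module ℝ V]
    (u : Fin mE → V) (w : Fin mI → V)
    (P : Fin mE → Prop) (Q : Fin mI → Prop) [DecidablePred P] [DecidablePred Q]
    (eA eB : Fin mE → ℝ) (eC eD : Fin mI → ℝ)
    (E1 : -∑ k, eA k • u k + ∑ k, eB k • u k + ∑ k, eC k • w k = 0)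
    (E2 : ∀ j, eA j + eB j = 0) (E3 : ∀ j, eC j + eD j = 0)
    (hAB : ∀ k, ¬ P k → eA k = 0 ∨ eB k = 0)
    (hCD : ∀ k, ¬ Q k → eC k = 0 ∨ eD k = 0)
    (hLI : ∀ d : {i : Fin mE // P i} ⊕ {i : Fin mI // Q i} → ℝ,
      ∑ j, d j • Sum.elim (fun i => u i.1) (fun i => w i.1) j = 0 → ∀ j, d j = 0) :
    (∀ k, eA k = 0) ∧ (∀ k, eB k = 0) ∧ (∀ k, eC k = 0) ∧ (∀ k, eD k = 0) := by
  have FA : ∀ k, ¬ P k → eA k = 0 := by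
    intro k hk
    rcases hAB k hk with h0 | h0
    · exact h0
    · have := E2 k; linarith
  have FB : ∀ k, ¬ P k → eB k = 0 := by
    intro k hk
    rcases hAB k hk with h0 | h0
    · have := E2 k; linarith
    · exact h0
  have FC : ∀ k, ¬ Q k → eC k = 0 := by
    intro k hk
    rcases hCD k hk with h0 | h0
    · exact h0
    · have := E3 k; linarith
  have key := hLI (Sum.elim (fun i => eB i.1 - eA i.1) (fun i => eC i.1)) (by
    rw [Fintype.sum_sum_type]
    simp only [Sum.elim_inl, Sum.elim_inr]
    rw [sum_subtype_smul' P (fun k => eB k - eA k) u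
        (fun k hk => by show eB k - eA k = 0; rw [FA k hk, FB k hk, sub_zero]),
      sum_subtype_smul' Q eC w FC]
    have split : ∑ k, (eB k - eA k) • u k = ∑ k, eB k • u k - ∑ k, eA k • u k := by
      rw [← Finset.sum_sub_distrib]
      exact Finset.sum_congr rfl (fun k _ => sub_smul _ _ _)
    rw [split]
    linear_combination (norm := module) E1)
  have ZA : ∀ k, eA k = 0 := by
    intro k
    by_cases hk : P k
    · have h1 := key (Sum.inl ⟨k, hk⟩)
      simp only [Sum.elim_inl] at h1
      have := E2 k
      linarith
    · exact FA k hk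
  have ZB : ∀ k, eB k = 0 := fun k => by have := E2 k; linarith [ZA k]
  have ZC : ∀ k, eC k = 0 := by
    intro k
    by_cases hk : Q k
    · have h1 := key (Sum.inr ⟨k, hk⟩)
      simpa using h1
    · exact FC k hk
  have ZD : ∀ k, eD k = 0 := fun k => by have := E3 k; linarith [ZC k]
  exact ⟨ZA, ZB, ZC, ZD⟩

/-- If at a feasible point `(x̂,ŷ,ẑ)` of (R_ρ) the gradients of the
active original constraints `{∇h_i(x̂) : h_i(x̂)=0} ∪ {∇g_i(x̂) : g_i(x̂)=0}` are
linearly independent, then the gradients (in `ℝ^{n+mE+mI}`) of the constraints of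
(R_ρ) that are active at `(x̂,ŷ,ẑ)` are linearly independent, i.e. LICQ holds. -/
theorem stmt3 {n mE mI : ℕ}
    (f : EuclideanSpace ℝ (Fin n) → ℝ)
    (h : Fin mE → EuclideanSpace ℝ (Fin n) → ℝ)
    (g : Fin mI → EuclideanSpace ℝ (Fin n) → ℝ)
    (hf : ContDiff ℝ 1 f) (hh : ∀ i, ContDiff ℝ 1 (h i)) (hg : ∀ i, ContDiff ℝ 1 (g i))
    (ρ : ℝ) (hρ : 0 < ρ)
    (xh : EuclideanSpace ℝ (Fin n)) (yh : Fin mE → ℝ) (zh : Fin mI → ℝ)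
    -- (x̂,ŷ,ẑ) is feasible for (R_ρ)
    (hfeas : (∀ i, 0 ≤ yh i - h i xh) ∧ (∀ i, 0 ≤ yh i + h i xh) ∧
      (∀ i, 0 ≤ zh i + g i xh) ∧ (∀ i, 0 ≤ zh i))
    -- the gradients of the active constraints of (P) are linearly independent
    (hLI : LinearIndependent ℝ
      (fun j : {i : Fin mE // h i xh = 0} ⊕ {i : Fin mI // g i xh = 0} =>
        Sum.elim (fun i => gradient (h i.1) xh) (fun i => gradient (g i.1) xh) j)) :
    LinearIndependent ℝ
      (fun j : ({i : Fin mE // yh i = h i xh} ⊕ {i : Fin mE // yh i = -(h i xh)}) ⊕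
               ({i : Fin mI // zh i = -(g i xh)} ⊕ {i : Fin mI // zh i = 0}) =>
        (Sum.elim
          (Sum.elim
            (fun i => ((-(gradient (h i.1) xh), Pi.single i.1 1, 0) :
              EuclideanSpace ℝ (Fin n) × (Fin mE → ℝ) × (Fin mI → ℝ)))
            (fun i => ((gradient (h i.1) xh, Pi.single i.1 1, 0) :
              EuclideanSpace ℝ (Fin n) × (Fin mE → ℝ) × (Fin mI → ℝ))))
          (Sum.elim
            (fun i => ((gradient (g i.1) xh, 0, Pi.single i.1 1) :
              EuclideanSpace ℝ (Fin n) × (Fin mE → ℝ) × (Fin mI → ℝ)))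
            (fun i => ((0, 0, Pi.single i.1 1) :
              EuclideanSpace ℝ (Fin n) × (Fin mE → ℝ) × (Fin mI → ℝ))))) j) := by
  rw [Fintype.linearIndependent_iff]
  intro c hc
  rw [Fintype.sum_sum_type] at hc
  simp only [Sum.elim_inl, Sum.elim_inr] at hc
  rw [Fintype.sum_sum_type, Fintype.sum_sum_type] at hc
  simp only [Sum.elim_inl, Sum.elim_inr] at hc
  rw [sum_subtype_smul (fun i => yh i = h i xh) (fun a => c (Sum.inl (Sum.inl a)))
      (fun k => ((-(gradient (h k) xh), Pi.single k 1, 0) :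
        EuclideanSpace ℝ (Fin n) × (Fin mE → ℝ) × (Fin mI → ℝ))),
    sum_subtype_smul (fun i => yh i = -(h i xh)) (fun a => c (Sum.inl (Sum.inr a)))
      (fun k => ((gradient (h k) xh, Pi.single k 1, 0) :
        EuclideanSpace ℝ (Fin n) × (Fin mE → ℝ) × (Fin mI → ℝ))),
    sum_subtype_smul (fun i => zh i = -(g i xh)) (fun a => c (Sum.inr (Sum.inl a)))
      (fun k => ((gradient (g k) xh, 0, Pi.single k 1) :
        EuclideanSpace ℝ (Fin n) × (Fin mE → ℝ) × (Fin mI → ℝ))),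
    sum_subtype_smul (fun i => zh i = 0) (fun a => c (Sum.inr (Sum.inr a)))
      (fun k => ((0, 0, Pi.single k 1) :
        EuclideanSpace ℝ (Fin n) × (Fin mE → ℝ) × (Fin mI → ℝ)))] at hc
  have h1 := congrArg Prod.fst hc
  simp only [Prod.fst_add, Prod.fst_sum, Prod.smul_fst, Prod.fst_zero, smul_neg, smul_zero,
    Finset.sum_neg_distrib, Finset.sum_const_zero, add_zero] at h1
  have h2 := congrArg (Prod.fst ∘ Prod.snd) hc
  simp only [Function.comp, Prod.snd_add, Prod.fst_add, Prod.snd_sum, Prod.fst_sum,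
    Prod.smul_snd, Prod.smul_fst, smul_zero, Finset.sum_const_zero, add_zero,
    Prod.snd_zero, Prod.fst_zero] at h2
  have h3 := congrArg (Prod.snd ∘ Prod.snd) hc
  simp only [Function.comp, Prod.snd_add, Prod.snd_sum, Prod.smul_snd, smul_zero,
    Finset.sum_const_zero, zero_add, Prod.snd_zero] at h3
  have E2 : ∀ j : Fin mE,
      (if hk : yh j = h j xh then c (Sum.inl (Sum.inl ⟨j, hk⟩)) else 0)
      + (if hk : yh j = -(h j xh) then c (Sum.inl (Sum.inr ⟨j, hk⟩)) else 0) = 0 := by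
    intro j
    have := congrFun h2 j
    simp only [Pi.add_apply, Finset.sum_apply, Pi.smul_apply, smul_eq_mul, Pi.single_apply,
      mul_ite, mul_one, mul_zero, Finset.sum_ite_eq, Finset.mem_univ, if_true,
      Pi.zero_apply] at this
    exact this
  have E3 : ∀ j : Fin mI,
      (if hk : zh j = -(g j xh) then c (Sum.inr (Sum.inl ⟨j, hk⟩)) else 0)
      + (if hk : zh j = 0 then c (Sum.inr (Sum.inr ⟨j, hk⟩)) else 0) = 0 := by
    intro j
    have := congrFun h3 j
    simp only [Pi.add_apply, Finset.sum_apply, Pi.smul_apply, smul_eq_mul, Pi.single_apply,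
      mul_ite, mul_one, mul_zero, Finset.sum_ite_eq, Finset.mem_univ, if_true,
      Pi.zero_apply] at this
    exact this
  obtain ⟨ZA, ZB, ZC, ZD⟩ := aux_coeffs
    (fun k => gradient (h k) xh) (fun k => gradient (g k) xh)
    (fun i => h i xh = 0) (fun i => g i xh = 0)
    (fun k => if hk : yh k = h k xh then c (Sum.inl (Sum.inl ⟨k, hk⟩)) else 0)
    (fun k => if hk : yh k = -(h k xh) then c (Sum.inl (Sum.inr ⟨k, hk⟩)) else 0)
    (fun k => if hk : zh k = -(g k xh) then c (Sum.inr (Sum.inl ⟨k, hk⟩)) else 0)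
    (fun k => if hk : zh k = 0 then c (Sum.inr (Sum.inr ⟨k, hk⟩)) else 0)
    h1 E2 E3
    (by
      intro k hk
      by_cases ha : yh k = h k xh
      · right
        have hb : ¬ (yh k = -(h k xh)) := fun hb => hk (by rw [ha] at hb; linarith)
        simp only [dif_neg hb]
      · left
        simp only [dif_neg ha])
    (by
      intro k hk
      by_cases hcc : zh k = -(g k xh)
      · right
        have hd : ¬ (zh k = 0) := fun hd => hk (by rw [hd] at hcc; linarith)
        simp only [dif_neg hd]
      · left
        simp only [dif_neg hcc])
    (Fintype.linearIndependent_iff.1 hLI)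
  rintro ((⟨i, hi⟩ | ⟨i, hi⟩) | (⟨i, hi⟩ | ⟨i, hi⟩))
  · have := ZA i; rw [dif_pos hi] at this; exact this
  · have := ZB i; rw [dif_pos hi] at this; exact this
  · have := ZC i; rw [dif_pos hi] at this; exact this
  · have := ZD i; rw [dif_pos hi] at this; exact this
end

section
/- Fix ρ>0. Suppose the exact penalty function P_ρ is bounded below on ℝⁿ and x* is a local minimizer of P_ρ. Let y* = |h(x*)| and z* = max{0, −g(x*)}. Then there exist multipliers u*, v* ∈ ℝ^{mE} and s*, t* ∈ ℝ^{mI} such that (x*,y*,z*) together with (u*,v*,s*,t*) is a KKT point of (R_ρ); moreover all components of u*, v*, s*, t* lie in [0,1]. -/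
/-!
At a local minimizer `x` of the exact penalty function the one-sided derivative in every direction
`d` is nonnegative. Writing `|hᵢ| = max hᵢ (-hᵢ)` and `max 0 (-gᵢ)` as maxima of two smooth
functions, this derivative is `⟪w, d⟫` for some `w` in the compact convex set `K` of vectors
`ρ ∇f + ∑ (uᵢ - vᵢ) ∇hᵢ - ∑ sᵢ ∇gᵢ` in which each pair of multipliers is a convex weighting of the
pieces attaining the maximum. If `0 ∉ K`, a separating hyperplane would give a direction `d` with
`⟪w, d⟫ < 0` on all of `K`. Hence `0 ∈ K`, and its multipliers are the KKT multipliers.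
-/

open RealInnerProductSpace Set Filter Topology

/-- The subdifferential of `max` at `(a, b)`: convex weights on the two arguments, vanishing on
an argument that does not attain the maximum. -/
def maxWeights (a b : ℝ) : Set (ℝ × ℝ) :=
  {w | 0 ≤ w.1 ∧ 0 ≤ w.2 ∧ w.1 + w.2 = 1 ∧ w.1 * (max a b - a) = 0 ∧ w.2 * (max a b - b) = 0}

lemma one_zero_mem_maxWeights {a b : ℝ} (h : b ≤ a) : ((1, 0) : ℝ × ℝ) ∈ maxWeights a b :=
  ⟨zero_le_one, le_rfl, add_zero 1, by simp [max_eq_left h], zero_mul _⟩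

lemma zero_one_mem_maxWeights {a b : ℝ} (h : a ≤ b) : ((0, 1) : ℝ × ℝ) ∈ maxWeights a b :=
  ⟨le_rfl, zero_le_one, zero_add 1, zero_mul _, by simp [max_eq_right h]⟩

lemma convex_maxWeights (a b : ℝ) : Convex ℝ (maxWeights a b) := by
  rintro w ⟨hw₁, hw₂, hw, hwa, hwb⟩ w' ⟨hw₁', hw₂', hw', hwa', hwb'⟩ c c' hc hc' hcc
  refine ⟨?_, ?_, ?_, ?_, ?_⟩ <;> simp only [Prod.fst_add, Prod.snd_add, Prod.smul_fst,
    Prod.smul_snd, smul_eq_mul]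
  · positivity
  · positivity
  · linear_combination c * hw + c' * hw' + hcc
  · linear_combination c * hwa + c' * hwa'
  · linear_combination c * hwb + c' * hwb'

lemma isCompact_maxWeights (a b : ℝ) : IsCompact (maxWeights a b) := by
  refine (isCompact_Icc (a := 0) (b := 1)).of_isClosed_subset ?_ ?_
  · simp only [maxWeights, ofPred_and]
    exact (isClosed_le continuous_const continuous_fst).inter
      ((isClosed_le continuous_const continuous_snd).inter
      ((isClosed_eq (by fun_prop) continuous_const).inter
      ((isClosed_eq (by fun_prop) continuous_const).inter
      (isClosed_eq (by fun_prop) continuous_const))))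
  · rintro w ⟨hw₁, hw₂, hw, -, -⟩
    exact ⟨⟨hw₁, hw₂⟩, show w.1 ≤ 1 by linarith, show w.2 ≤ 1 by linarith⟩

lemma fst_mem_Icc_of_mem_maxWeights {a b : ℝ} {w : ℝ × ℝ} (hw : w ∈ maxWeights a b) :
    w.1 ∈ Icc (0 : ℝ) 1 :=
  ⟨hw.1, by linarith [hw.2.1, hw.2.2.1]⟩

lemma snd_mem_Icc_of_mem_maxWeights {a b : ℝ} {w : ℝ × ℝ} (hw : w ∈ maxWeights a b) :
    w.2 ∈ Icc (0 : ℝ) 1 :=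
  ⟨hw.2.1, by linarith [hw.1, hw.2.2.1]⟩

lemma hasDerivWithinAt_Ioi_max_of_eq {φ ψ : ℝ → ℝ} {a b x : ℝ} (hφ : HasDerivAt φ a x)
    (hψ : HasDerivAt ψ b x) (hx : φ x = ψ x) :
    HasDerivWithinAt (fun t => max (φ t) (ψ t)) (max a b) (Ioi x) x := by
  rw [hasDerivWithinAt_iff_tendsto_slope' self_notMem_Ioi]
  have hslope {χ : ℝ → ℝ} {c : ℝ} (hχ : HasDerivAt χ c x) : Tendsto (slope χ x) (𝓝[>] x) (𝓝 c) :=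
    (hasDerivWithinAt_iff_tendsto_slope' self_notMem_Ioi).1 hχ.hasDerivWithinAt
  refine ((hslope hφ).max (hslope hψ)).congr' ?_
  filter_upwards [self_mem_nhdsWithin] with t (ht : x < t)
  simp only [slope, vsub_eq_sub, smul_eq_mul]
  rw [← mul_max_of_nonneg _ _ (inv_nonneg.2 (sub_pos.2 ht).le), ← hx, max_sub_sub_right, hx,
    max_self]

theorem HasDerivAt.exists_maxWeights_hasDerivWithinAt_max {φ ψ : ℝ → ℝ} {a b x : ℝ}
    (hφ : HasDerivAt φ a x) (hψ : HasDerivAt ψ b x) :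
    ∃ w ∈ maxWeights (φ x) (ψ x),
      HasDerivWithinAt (fun t => max (φ t) (ψ t)) (w.1 * a + w.2 * b) (Ioi x) x := by
  rcases lt_trichotomy (φ x) (ψ x) with hlt | heq | hgt
  · refine ⟨(0, 1), zero_one_mem_maxWeights hlt.le, ?_⟩
    have hmax : (fun t => max (φ t) (ψ t)) =ᶠ[𝓝 x] ψ :=
      (hφ.continuousAt.eventually_lt hψ.continuousAt hlt).mono fun t ht => max_eq_right ht.le
    simpa using (hψ.congr_of_eventuallyEq hmax).hasDerivWithinAt
  · rcases le_total b a with hba | hab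
    · refine ⟨(1, 0), one_zero_mem_maxWeights heq.ge, ?_⟩
      simpa [max_eq_left hba] using hasDerivWithinAt_Ioi_max_of_eq hφ hψ heq
    · refine ⟨(0, 1), zero_one_mem_maxWeights heq.le, ?_⟩
      simpa [max_eq_right hab] using hasDerivWithinAt_Ioi_max_of_eq hφ hψ heq
  · refine ⟨(1, 0), one_zero_mem_maxWeights hgt.le, ?_⟩
    have hmax : (fun t => max (φ t) (ψ t)) =ᶠ[𝓝 x] φ :=
      (hψ.continuousAt.eventually_lt hφ.continuousAt hgt).mono fun t ht => max_eq_left ht.le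
    simpa using (hφ.congr_of_eventuallyEq hmax).hasDerivWithinAt

lemma IsLocalMin.hasDerivWithinAt_Ioi_nonneg {f : ℝ → ℝ} {a f' : ℝ} (h : IsLocalMin f a)
    (hf : HasDerivWithinAt f f' (Ioi a) a) : 0 ≤ f' := by
  have hsegment : segment ℝ a (a + 1) ⊆ Ici a :=
    (segment_subset_Icc (by simp)).trans Icc_subset_Ici_self
  simpa using (h.on (Ici a)).hasFDerivWithinAt_nonneg (hasDerivWithinAt_Ioi_iff_Ici.1 hf)
    (mem_posTangentConeAt_of_segment_subset hsegment)

section InnerProductSpace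

variable {E : Type*} [NormedAddCommGroup E] [InnerProductSpace ℝ E] [CompleteSpace E]

lemma HasGradientAt.hasDerivAt_comp_add_smul {φ : E → ℝ} {φ' x : E} (h : HasGradientAt φ φ' x)
    (d : E) : HasDerivAt (fun t : ℝ => φ (x + t • d)) ⟪φ', d⟫ 0 := by
  have hline : HasDerivAt (fun t : ℝ => x + t • d) d 0 := by
    simpa using ((hasDerivAt_id (0 : ℝ)).smul_const d).const_add x
  simpa [Function.comp_def] using h.hasFDerivAt.comp_hasDerivAt_of_eq 0 hline (by simp)

lemma zero_mem_of_forall_exists_inner_nonneg {K : Set E} (hKc : IsCompact K) (hKv : Convex ℝ K)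
    (h : ∀ d : E, ∃ w ∈ K, 0 ≤ ⟪w, d⟫) : (0 : E) ∈ K := by
  by_contra h0
  obtain ⟨φ, u, hφ0, hφK⟩ := geometric_hahn_banach_point_closed hKv hKc.isClosed h0
  obtain ⟨w, hwK, hw⟩ := h (-(InnerProductSpace.toDual ℝ E).symm φ)
  rw [inner_neg_right, real_inner_comm, InnerProductSpace.toDual_symm_apply] at hw
  linarith [hφK w hwK, map_zero φ]

end InnerProductSpace

section ExactPenalty

variable {E ι κ : Type*} (f : E → ℝ) (h : ι → E → ℝ) (g : κ → E → ℝ) (ρ : ℝ)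

/-- Multipliers as weights in `|h i| = max (h i) (-h i)` and `max 0 (-g i)`: the pair attached to
`h i` is `(u i, v i)` and the pair attached to `g i` is `(t i, s i)`. -/
def penaltyMultipliers (x : E) : Set ((ι → ℝ × ℝ) × (κ → ℝ × ℝ)) :=
  (univ.pi fun i => maxWeights (h i x) (-h i x)) ×ˢ (univ.pi fun i => maxWeights 0 (-g i x))

lemma isCompact_penaltyMultipliers (x : E) : IsCompact (penaltyMultipliers h g x) :=
  (isCompact_univ_pi fun _ => isCompact_maxWeights _ _).prod
    (isCompact_univ_pi fun _ => isCompact_maxWeights _ _)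

lemma convex_penaltyMultipliers (x : E) : Convex ℝ (penaltyMultipliers h g x) :=
  (convex_pi fun _ _ => convex_maxWeights _ _).prod (convex_pi fun _ _ => convex_maxWeights _ _)

variable [NormedAddCommGroup E] [InnerProductSpace ℝ E] [CompleteSpace E] [Fintype ι] [Fintype κ]

def exactPenalty (x : E) : ℝ :=
  ρ * f x + ((∑ i, |h i x|) + ∑ i, max 0 (-(g i x)))

noncomputable def multiplierCombination (x : E) : (ι → ℝ × ℝ) × (κ → ℝ × ℝ) →ₗ[ℝ] E where
  toFun p := (∑ i, ((p.1 i).1 - (p.1 i).2) • gradient (h i) x) - ∑ i, (p.2 i).2 • gradient (g i) x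
  map_add' p q := by
    simp only [Prod.fst_add, Prod.snd_add, Pi.add_apply, add_sub_add_comm, add_smul,
      Finset.sum_add_distrib]
  map_smul' c p := by
    simp only [Prod.smul_fst, Prod.smul_snd, Pi.smul_apply, smul_eq_mul, ← mul_sub, mul_smul,
      ← Finset.smul_sum, RingHom.id_apply, smul_sub]

variable {f h g}

lemma exists_mem_penaltyMultipliers_hasDerivWithinAt {x : E} (hf : DifferentiableAt ℝ f x)
    (hh : ∀ i, DifferentiableAt ℝ (h i) x) (hg : ∀ i, DifferentiableAt ℝ (g i) x) (d : E) :
    ∃ p ∈ penaltyMultipliers h g x,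
      HasDerivWithinAt (fun t : ℝ => exactPenalty f h g ρ (x + t • d))
        ⟪ρ • gradient f x + multiplierCombination h g x p, d⟫ (Ioi 0) 0 := by
  have hline {φ : E → ℝ} (hφ : DifferentiableAt ℝ φ x) :=
    hφ.hasGradientAt.hasDerivAt_comp_add_smul d
  choose w hw hw' using fun i =>
    (hline (hh i)).exists_maxWeights_hasDerivWithinAt_max (hline (hh i)).neg
  choose v hv hv' using fun i =>
    (hasDerivAt_const (0 : ℝ) (0 : ℝ)).exists_maxWeights_hasDerivWithinAt_max (hline (hg i)).neg
  simp only [Pi.neg_apply, zero_smul, add_zero] at hw hv hw' hv'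
  refine ⟨(w, v), ⟨fun i _ => hw i, fun i _ => hv i⟩, ?_⟩
  have hderiv := ((hline hf).const_mul ρ).hasDerivWithinAt.fun_add
    ((HasDerivWithinAt.fun_sum (u := .univ) fun i _ => hw' i).fun_add
      (HasDerivWithinAt.fun_sum (u := .univ) fun i _ => hv' i))
  simp only [exactPenalty, abs_eq_max_neg]
  refine hderiv.congr_deriv ?_
  simp only [multiplierCombination, LinearMap.coe_mk, AddHom.coe_mk, inner_add_left,
    inner_sub_left, sum_inner, real_inner_smul_left]
  simp only [sub_eq_add_neg, ← Finset.sum_neg_distrib]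
  congr 2 <;> exact Finset.sum_congr rfl fun i _ => by ring

theorem IsLocalMin.exists_penaltyMultipliers {x : E} (hmin : IsLocalMin (exactPenalty f h g ρ) x)
    (hf : DifferentiableAt ℝ f x) (hh : ∀ i, DifferentiableAt ℝ (h i) x)
    (hg : ∀ i, DifferentiableAt ℝ (g i) x) :
    ∃ p ∈ penaltyMultipliers h g x, ρ • gradient f x + multiplierCombination h g x p = 0 := by
  set L := multiplierCombination h g x
  have hK : (fun p => ρ • gradient f x + L p) '' penaltyMultipliers h g x =
      (fun y => ρ • gradient f x + y) '' (L '' penaltyMultipliers h g x) :=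
    (image_image _ _ _).symm
  refine zero_mem_of_forall_exists_inner_nonneg
    ((isCompact_penaltyMultipliers h g x).image
      (continuous_const.add L.continuous_of_finiteDimensional))
    (hK ▸ ((convex_penaltyMultipliers h g x).linear_image L).translate _) fun d => ?_
  obtain ⟨p, hp, hderiv⟩ := exists_mem_penaltyMultipliers_hasDerivWithinAt ρ hf hh hg d
  have hmin' : IsLocalMin (exactPenalty f h g ρ) (x + (0 : ℝ) • d) := by simpa using hmin
  exact ⟨_, mem_image_of_mem _ hp,
    (hmin'.comp_continuous (g := fun t : ℝ => x + t • d) (by fun_prop)).hasDerivWithinAt_Ioi_nonneg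
      hderiv⟩

end ExactPenalty

theorem stmt4_general {n mE mI : ℕ}
    (f : EuclideanSpace ℝ (Fin n) → ℝ)
    (h : Fin mE → EuclideanSpace ℝ (Fin n) → ℝ)
    (g : Fin mI → EuclideanSpace ℝ (Fin n) → ℝ)
    (hf : ContDiff ℝ 1 f) (hh : ∀ i, ContDiff ℝ 1 (h i)) (hg : ∀ i, ContDiff ℝ 1 (g i))
    (ρ : ℝ)
    (xs : EuclideanSpace ℝ (Fin n))
    (hmin : IsLocalMin
      (fun x => ρ * f x + ((∑ i, |h i x|) + ∑ i, max 0 (-(g i x)))) xs) :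
    ∃ (u v : Fin mE → ℝ) (s t : Fin mI → ℝ),
      -- nonnegativity and boundedness of the multipliers
      (∀ i, u i ∈ Set.Icc (0:ℝ) 1) ∧ (∀ i, v i ∈ Set.Icc (0:ℝ) 1) ∧
      (∀ i, s i ∈ Set.Icc (0:ℝ) 1) ∧ (∀ i, t i ∈ Set.Icc (0:ℝ) 1) ∧
      -- stationarity: ρ∇f(x*) + ∇h(x*)(u−v) − ∇g(x*)s = 0
      (ρ • gradient f xs + (∑ i, (u i - v i) • gradient (h i) xs)
        - (∑ i, s i • gradient (g i) xs) = 0) ∧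
      -- 1 − u_i − v_i = 0 and 1 − s_i − t_i = 0
      (∀ i, 1 - u i - v i = 0) ∧ (∀ i, 1 - s i - t i = 0) ∧
      -- complementarity
      (∑ i, u i * (|h i xs| - h i xs) = 0) ∧
      (∑ i, v i * (|h i xs| + h i xs) = 0) ∧
      (∑ i, s i * (max 0 (-(g i xs)) + g i xs) = 0) ∧
      (∑ i, t i * max 0 (-(g i xs)) = 0) := by
  have hdiff {φ : EuclideanSpace ℝ (Fin n) → ℝ} (hφ : ContDiff ℝ 1 φ) : DifferentiableAt ℝ φ xs :=
    hφ.differentiable one_ne_zero xs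
  obtain ⟨⟨w, w'⟩, ⟨hw, hw'⟩, hstat⟩ := IsLocalMin.exists_penaltyMultipliers ρ hmin (hdiff hf)
    (fun i => hdiff (hh i)) (fun i => hdiff (hg i))
  simp only [mem_univ_pi] at hw hw'
  refine ⟨fun i => (w i).1, fun i => (w i).2, fun i => (w' i).2, fun i => (w' i).1,
    fun i => fst_mem_Icc_of_mem_maxWeights (hw i), fun i => snd_mem_Icc_of_mem_maxWeights (hw i),
    fun i => snd_mem_Icc_of_mem_maxWeights (hw' i), fun i => fst_mem_Icc_of_mem_maxWeights (hw' i),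
    by rwa [add_sub_assoc], fun i => ?_, fun i => ?_,
    Finset.sum_eq_zero fun i _ => ?_, Finset.sum_eq_zero fun i _ => ?_,
    Finset.sum_eq_zero fun i _ => ?_, Finset.sum_eq_zero fun i _ => ?_⟩
  · obtain ⟨-, -, hsum, -, -⟩ := hw i
    linarith
  · obtain ⟨-, -, hsum, -, -⟩ := hw' i
    linarith
  · obtain ⟨-, -, -, hu, -⟩ := hw i
    simpa [abs_eq_max_neg] using hu
  · obtain ⟨-, -, -, -, hv⟩ := hw i
    simpa [abs_eq_max_neg] using hv
  · obtain ⟨-, -, -, -, hs⟩ := hw' i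
    simpa using hs
  · obtain ⟨-, -, -, ht, -⟩ := hw' i
    simpa using ht

/-- If `P_ρ` is bounded below and `x*` is a local minimizer of `P_ρ`,
then with `y* = |h(x*)|`, `z* = max{0,−g(x*)}` there are multipliers
`u*, v*, s*, t*` with components in `[0,1]` such that `(x*,y*,z*)` together with
`(u*,v*,s*,t*)` is a KKT point of (R_ρ). -/
theorem stmt4 {n mE mI : ℕ}
    (f : EuclideanSpace ℝ (Fin n) → ℝ)
    (h : Fin mE → EuclideanSpace ℝ (Fin n) → ℝ)
    (g : Fin mI → EuclideanSpace ℝ (Fin n) → ℝ)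
    (hf : ContDiff ℝ 1 f) (hh : ∀ i, ContDiff ℝ 1 (h i)) (hg : ∀ i, ContDiff ℝ 1 (g i))
    (ρ : ℝ) (hρ : 0 < ρ)
    (hbdd : BddBelow (Set.range fun x : EuclideanSpace ℝ (Fin n) =>
      ρ * f x + ((∑ i, |h i x|) + ∑ i, max 0 (-(g i x)))))
    (xs : EuclideanSpace ℝ (Fin n))
    (hmin : IsLocalMin
      (fun x => ρ * f x + ((∑ i, |h i x|) + ∑ i, max 0 (-(g i x)))) xs) :
    ∃ (u v : Fin mE → ℝ) (s t : Fin mI → ℝ),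
      -- nonnegativity and boundedness of the multipliers
      (∀ i, u i ∈ Set.Icc (0:ℝ) 1) ∧ (∀ i, v i ∈ Set.Icc (0:ℝ) 1) ∧
      (∀ i, s i ∈ Set.Icc (0:ℝ) 1) ∧ (∀ i, t i ∈ Set.Icc (0:ℝ) 1) ∧
      -- stationarity: ρ∇f(x*) + ∇h(x*)(u−v) − ∇g(x*)s = 0
      (ρ • gradient f xs + (∑ i, (u i - v i) • gradient (h i) xs)
        - (∑ i, s i • gradient (g i) xs) = 0) ∧
      -- 1 − u_i − v_i = 0 and 1 − s_i − t_i = 0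
      (∀ i, 1 - u i - v i = 0) ∧ (∀ i, 1 - s i - t i = 0) ∧
      -- complementarity
      (∑ i, u i * (|h i xs| - h i xs) = 0) ∧
      (∑ i, v i * (|h i xs| + h i xs) = 0) ∧
      (∑ i, s i * (max 0 (-(g i xs)) + g i xs) = 0) ∧
      (∑ i, t i * max 0 (-(g i xs)) = 0) :=
  stmt4_general f h g hf hh hg ρ xs hmin
end

section
/- Let h:ℝⁿ→ℝ^{mE} and g:ℝⁿ→ℝ^{mI} be continuously differentiable and suppose x* is a local minimizer of the ℓ₁ constraint violation c. Then there exist scalars ξ_i ∈ [−1,1] for each i with h_i(x*)=0 and η_i ∈ [−1,0] for each i with g_i(x*)=0 such that Σ_{i: h_i(x*)>0} ∇h_i(x*) − Σ_{i: h_i(x*)<0} ∇h_i(x*) + Σ_{i: h_i(x*)=0} ξ_i ∇h_i(x*) − Σ_{i: g_i(x*)<0} ∇g_i(x*) + Σ_{i: g_i(x*)=0} η_i ∇g_i(x*) = 0. -/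
/-!
Both penalty terms have the form `kink α β ∘ fᵢ` with `kink α β a = max (α a) (β a)`. Along a
direction `d`, the one-sided derivative of such a term is `σ ⟪∇fᵢ x, d⟫` for some `σ` in the
subdifferential of `kink α β` at `fᵢ x`, so at a local minimizer every direction `d` admits
admissible multipliers `σ` with `⟪∑ σᵢ ∇fᵢ x, d⟫ ≥ 0`. The vectors `∑ σᵢ ∇fᵢ x` with admissible
`σ` form a compact convex set; if it missed `0`, a separating direction would make all these
inner products negative.
-/

open RealInnerProductSpace

open Filter Set Topology

def kink (α β a : ℝ) : ℝ := max (α * a) (β * a)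

/-- The subdifferential of the convex function `kink α β` at `a`, when `α ≤ β`. -/
def kinkSubdiff (α β a : ℝ) : Set ℝ :=
  if 0 < a then {β} else if a < 0 then {α} else Icc α β

section Kink

variable {α β a : ℝ}

lemma kinkSubdiff_of_pos (ha : 0 < a) : kinkSubdiff α β a = {β} := if_pos ha

lemma kinkSubdiff_of_neg (ha : a < 0) : kinkSubdiff α β a = {α} := by
  rw [kinkSubdiff, if_neg ha.not_gt, if_pos ha]

lemma kinkSubdiff_zero : kinkSubdiff α β 0 = Icc α β := by
  simp [kinkSubdiff]

lemma isCompact_kinkSubdiff : IsCompact (kinkSubdiff α β a) := by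
  unfold kinkSubdiff
  split_ifs <;> first | exact isCompact_singleton | exact isCompact_Icc

lemma convex_kinkSubdiff : Convex ℝ (kinkSubdiff α β a) := by
  unfold kinkSubdiff
  split_ifs <;> first | exact convex_singleton _ | exact convex_Icc _ _

lemma continuous_kink : Continuous (kink α β) := by
  unfold kink
  fun_prop

lemma kink_zero : kink α β 0 = 0 := by
  simp [kink]

lemma kink_mul_of_nonneg {t : ℝ} (ht : 0 ≤ t) (a : ℝ) : kink α β (t * a) = t * kink α β a := by
  simp only [kink, mul_left_comm _ t, mul_max_of_nonneg _ _ ht]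

lemma abs_eq_kink (a : ℝ) : |a| = kink (-1) 1 a := by
  simp [kink, abs_eq_max_neg, max_comm]

lemma max_zero_neg_eq_kink (a : ℝ) : max 0 (-a) = kink (-1) 0 a := by
  simp [kink, max_comm]

lemma exists_mem_Icc_mul_eq_kink (hαβ : α ≤ β) (a : ℝ) : ∃ σ ∈ Icc α β, σ * a = kink α β a := by
  rcases le_total (α * a) (β * a) with h | h
  · exact ⟨β, ⟨hαβ, le_rfl⟩, (max_eq_right h).symm⟩
  · exact ⟨α, ⟨le_rfl, hαβ⟩, (max_eq_left h).symm⟩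

lemma hasDerivAt_kink_of_pos (hαβ : α ≤ β) (ha : 0 < a) : HasDerivAt (kink α β) β a := by
  refine (hasDerivAt_id a).const_mul β |>.congr_of_eventuallyEq ?_ |>.congr_deriv (mul_one β)
  filter_upwards [eventually_gt_nhds ha] with y hy
  exact max_eq_right (mul_le_mul_of_nonneg_right hαβ hy.le)

lemma hasDerivAt_kink_of_neg (hαβ : α ≤ β) (ha : a < 0) : HasDerivAt (kink α β) α a := by
  refine (hasDerivAt_id a).const_mul α |>.congr_of_eventuallyEq ?_ |>.congr_deriv (mul_one α)
  filter_upwards [eventually_lt_nhds ha] with y hy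
  exact max_eq_left (mul_le_mul_of_nonpos_right hαβ hy.le)

theorem exists_mem_kinkSubdiff_tendsto_slope_kink_comp (hαβ : α ≤ β) {φ : ℝ → ℝ} {D : ℝ}
    (hφ : HasDerivWithinAt φ D (Ioi 0) 0) :
    ∃ σ ∈ kinkSubdiff α β (φ 0), Tendsto (slope (kink α β ∘ φ) 0) (𝓝[>] 0) (𝓝 (σ * D)) := by
  have hslope {ψ : ℝ → ℝ} {L : ℝ} (hψ : HasDerivWithinAt ψ L (Ioi 0) 0) :
      Tendsto (slope ψ 0) (𝓝[>] 0) (𝓝 L) :=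
    (hasDerivWithinAt_iff_tendsto_slope' (lt_irrefl 0)).1 hψ
  rcases lt_trichotomy (φ 0) 0 with hneg | hzero | hpos
  · exact ⟨α, by rw [kinkSubdiff_of_neg hneg]; rfl,
      hslope ((hasDerivAt_kink_of_neg hαβ hneg).comp_hasDerivWithinAt 0 hφ)⟩
  · obtain ⟨σ, hσ, hσD⟩ := exists_mem_Icc_mul_eq_kink hαβ D
    refine ⟨σ, by rwa [hzero, kinkSubdiff_zero], hσD ▸ ?_⟩
    -- positive homogeneity of `kink` turns the slope of `kink ∘ φ` into `kink` of the slope of `φ`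
    refine ((continuous_kink.tendsto D).comp (hslope hφ)).congr' ?_
    filter_upwards [self_mem_nhdsWithin] with t (ht : 0 < t)
    simp only [Function.comp_apply, slope_def_field, hzero, kink_zero, sub_zero, div_eq_inv_mul,
      kink_mul_of_nonneg (inv_nonneg.2 ht.le)]
  · exact ⟨β, by rw [kinkSubdiff_of_pos hpos]; rfl,
      hslope ((hasDerivAt_kink_of_pos hαβ hpos).comp_hasDerivWithinAt 0 hφ)⟩

end Kink

lemma IsLocalMin.nonneg_of_tendsto_slope {ψ : ℝ → ℝ} {a L : ℝ} (hmin : IsLocalMin ψ a)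
    (hL : Tendsto (slope ψ a) (𝓝[>] a) (𝓝 L)) : 0 ≤ L := by
  refine ge_of_tendsto hL ?_
  filter_upwards [hmin.filter_mono nhdsWithin_le_nhds, self_mem_nhdsWithin] with t hψt (ht : a < t)
  rw [slope_def_field]
  exact div_nonneg (sub_nonneg.2 hψt) (sub_nonneg.2 ht.le)

theorem zero_mem_of_forall_exists_inner_nonneg_s6 {E : Type*} [NormedAddCommGroup E]
    [InnerProductSpace ℝ E] [CompleteSpace E] {K : Set E} (hconv : Convex ℝ K)
    (hclosed : IsClosed K) (h : ∀ d, ∃ k ∈ K, 0 ≤ ⟪k, d⟫) : (0 : E) ∈ K := by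
  by_contra h0
  obtain ⟨f, u, hfK, hu⟩ := geometric_hahn_banach_closed_point hconv hclosed h0
  obtain ⟨k, hk, hnonneg⟩ := h ((InnerProductSpace.toDual ℝ E).symm f)
  rw [real_inner_comm, InnerProductSpace.toDual_symm_apply] at hnonneg
  linarith [hfK k hk, map_zero f]

theorem IsLocalMin.exists_kinkSubdiff_sum_smul_gradient_eq_zero {E : Type*}
    [NormedAddCommGroup E] [InnerProductSpace ℝ E] [CompleteSpace E] {ι : Type*} [Fintype ι]
    {f : ι → E → ℝ} {α β : ι → ℝ} {x : E} (hαβ : ∀ i, α i ≤ β i)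
    (hf : ∀ i, DifferentiableAt ℝ (f i) x)
    (hmin : IsLocalMin (fun y => ∑ i, kink (α i) (β i) (f i y)) x) :
    ∃ σ : ι → ℝ,
      (∀ i, σ i ∈ kinkSubdiff (α i) (β i) (f i x)) ∧ ∑ i, σ i • gradient (f i) x = 0 := by
  set C := univ.pi fun i => kinkSubdiff (α i) (β i) (f i x)
  set Φ := Fintype.linearCombination ℝ fun i => gradient (f i) x
  have hC : IsCompact C := isCompact_univ_pi fun _ => isCompact_kinkSubdiff
  obtain ⟨σ, hσ, hσ0⟩ : (0 : E) ∈ Φ '' C := by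
    refine zero_mem_of_forall_exists_inner_nonneg_s6
      ((convex_pi fun _ _ => convex_kinkSubdiff).linear_image Φ)
      (hC.image Φ.continuous_of_finiteDimensional).isClosed fun d => ?_
    have hline (i : ι) : HasDerivAt (fun t : ℝ => f i (x + t • d)) ⟪gradient (f i) x, d⟫ 0 :=
      (hf i).hasGradientAt.hasFDerivAt.hasLineDerivAt d
    choose σ hσ hlim using fun i =>
      exists_mem_kinkSubdiff_tendsto_slope_kink_comp (hαβ i) (hline i).hasDerivWithinAt
    refine ⟨Φ σ, mem_image_of_mem Φ fun i _ => by simpa using hσ i, ?_⟩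
    have hmin' : IsLocalMin (fun t : ℝ => ∑ i, kink (α i) (β i) (f i (x + t • d))) 0 := by
      have hmin₀ : IsLocalMin (fun y => ∑ i, kink (α i) (β i) (f i y)) (x + (0 : ℝ) • d) := by
        rwa [zero_smul, add_zero]
      exact hmin₀.comp_continuous (g := fun t : ℝ => x + t • d) (by fun_prop)
    have hslope : Tendsto (slope (fun t : ℝ => ∑ i, kink (α i) (β i) (f i (x + t • d))) 0)
        (𝓝[>] 0) (𝓝 (∑ i, σ i * ⟪gradient (f i) x, d⟫)) := by
      refine (tendsto_finsetSum _ fun i _ => hlim i).congr fun t => ?_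
      simp only [slope_def_field, Function.comp_apply, ← Finset.sum_sub_distrib, Finset.sum_div]
    simpa [Φ, Fintype.linearCombination_apply, sum_inner, real_inner_smul_left] using
      hmin'.nonneg_of_tendsto_slope hslope
  exact ⟨σ, fun i => hσ i (mem_univ i), by simpa [Φ, Fintype.linearCombination_apply] using hσ0⟩

/-- If `x*` is a local minimizer of the ℓ₁ constraint violation `c`,
then there are scalars `ξ_i ∈ [−1,1]` for the indices with `h_i(x*) = 0` and
`η_i ∈ [−1,0]` for the indices with `g_i(x*) = 0` such that
`Σ_{h_i>0} ∇h_i − Σ_{h_i<0} ∇h_i + Σ_{h_i=0} ξ_i ∇h_i − Σ_{g_i<0} ∇g_i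
 + Σ_{g_i=0} η_i ∇g_i = 0` (here encoded via coefficient vectors `ξ, η` that are
prescribed on the non-active indices). -/
theorem stmt6 {n mE mI : ℕ}
    (h : Fin mE → EuclideanSpace ℝ (Fin n) → ℝ)
    (g : Fin mI → EuclideanSpace ℝ (Fin n) → ℝ)
    (hh : ∀ i, ContDiff ℝ 1 (h i)) (hg : ∀ i, ContDiff ℝ 1 (g i))
    (xs : EuclideanSpace ℝ (Fin n))
    (hmin : IsLocalMin (fun x => (∑ i, |h i x|) + ∑ i, max 0 (-(g i x))) xs) :
    ∃ (ξ : Fin mE → ℝ) (η : Fin mI → ℝ),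
      (∀ i, 0 < h i xs → ξ i = 1) ∧
      (∀ i, h i xs < 0 → ξ i = -1) ∧
      (∀ i, h i xs = 0 → ξ i ∈ Set.Icc (-1 : ℝ) 1) ∧
      (∀ i, g i xs < 0 → η i = -1) ∧
      (∀ i, 0 < g i xs → η i = 0) ∧
      (∀ i, g i xs = 0 → η i ∈ Set.Icc (-1 : ℝ) 0) ∧
      (∑ i, ξ i • gradient (h i) xs) + (∑ i, η i • gradient (g i) xs) = 0 := by
  have hmin' : IsLocalMin (fun x => ∑ j, kink (-1) (Sum.elim 1 0 j) (Sum.elim h g j x)) xs := by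
    convert hmin using 2 with x
    simp [Fintype.sum_sum_type, abs_eq_kink, max_zero_neg_eq_kink]
  have hsmooth : ∀ j, ContDiff ℝ 1 (Sum.elim h g j) := Sum.forall.2 ⟨hh, hg⟩
  obtain ⟨σ, hσ, hσ0⟩ := hmin'.exists_kinkSubdiff_sum_smul_gradient_eq_zero
    (by rintro (i | i) <;> norm_num) fun j => (hsmooth j).differentiable one_ne_zero xs
  refine ⟨σ ∘ Sum.inl, σ ∘ Sum.inr, fun i hi => ?_, fun i hi => ?_, fun i hi => ?_,
    fun i hi => ?_, fun i hi => ?_, fun i hi => ?_, by simpa [Fintype.sum_sum_type] using hσ0⟩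
  · simpa [kinkSubdiff_of_pos hi] using hσ (.inl i)
  · simpa [kinkSubdiff_of_neg hi] using hσ (.inl i)
  · simpa [hi, kinkSubdiff_zero] using hσ (.inl i)
  · simpa [kinkSubdiff_of_neg hi] using hσ (.inr i)
  · simpa [kinkSubdiff_of_pos hi] using hσ (.inr i)
  · simpa [hi, kinkSubdiff_zero] using hσ (.inr i)
end

section
/- Fix ρ>0. Let (x*,y*,z*) with y* = |h(x*)| and z* = max{0,−g(x*)} be a KKT point of (R_ρ) with multipliers (u*,v*,s*,t*), and define the active sets I_h* = {i : h_i(x*)=0} and I_g* = {i : g_i(x*)=0}. If x* is a local minimizer of the ℓ₁ constraint violation c, then x* is a KKT point of the equality-constrained problem: minimize f(x) subject to h_i(x)=0 for i ∈ I_h* and g_i(x)=0 for i ∈ I_g*; that is, there exist scalars μ̂_i for i ∈ I_h* and λ̂_i for i ∈ I_g* such that ∇f(x*) − Σ_{i∈I_h*} μ̂_i ∇h_i(x*) − Σ_{i∈I_g*} λ̂_i ∇g_i(x*) = 0. -/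
/-!
Complementarity forces the multipliers of the inactive constraints to be the derivatives of the
ℓ₁ penalty terms: `u i - v i = sign (h i x*)` when `h i x* ≠ 0`, and `s i` is `1` or `0`
according as `g i x* < 0` or `g i x* > 0`. Along a direction `d` orthogonal to all active
gradients the active terms of `c` are `o(t)`, so `t ↦ c (x* + t • d)` is differentiable at `0`,
and its derivative vanishes at the local minimizer. Pairing the stationarity condition of (R_ρ)
with `d` then leaves `ρ ⟪∇f x*, d⟫ = 0`. Hence `∇f x*` lies in the double orthogonal complement
of the active gradients, which in finite dimension is their span.
-/

open RealInnerProductSpace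

section AbsComp

variable {a : ℝ → ℝ} {a' t : ℝ}

theorem HasDerivAt.comp_zero_of_abs_le {φ : ℝ → ℝ} (hφ : ∀ y, |φ y| ≤ |y|)
    (ha : HasDerivAt a 0 t) (hat : a t = 0) : HasDerivAt (fun s => φ (a s)) 0 t := by
  have hφ0 : φ 0 = 0 := abs_nonpos_iff.1 (by simpa using hφ 0)
  rw [hasDerivAt_iff_isLittleO] at ha ⊢
  simp only [hat, hφ0, sub_zero, smul_zero] at ha ⊢
  exact (Asymptotics.isBigO_of_le _ fun s => by simpa using hφ (a s)).trans_isLittleO ha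

theorem HasDerivAt.abs_of_eq_zero_imp (ha : HasDerivAt a a' t) (h : a t = 0 → a' = 0) :
    HasDerivAt (fun s => |a s|) (SignType.sign (a t) * a') t := by
  by_cases hat : a t = 0
  · rw [hat, h hat, mul_zero]
    exact (h hat ▸ ha).comp_zero_of_abs_le (fun y => (abs_abs y).le) hat
  · simpa [Function.comp_def, mul_comm] using (hasDerivAt_abs hat).comp t ha

theorem HasDerivAt.max_zero_neg (ha : HasDerivAt a a' t) (h : a t = 0 → a' = 0) :
    HasDerivAt (fun s => max 0 (-a s)) (-if a t < 0 then a' else 0) t := by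
  rcases lt_trichotomy (a t) 0 with hat | hat | hat
  · rw [if_pos hat]
    refine ha.neg.congr_of_eventuallyEq ?_
    filter_upwards [ha.continuousAt.eventually (eventually_lt_nhds hat)] with s hs
    exact max_eq_right (by linarith)
  · rw [if_neg hat.not_lt, neg_zero]
    refine (h hat ▸ ha).comp_zero_of_abs_le (φ := fun y => max 0 (-y)) (fun y => ?_) hat
    rw [abs_of_nonneg (le_max_left _ _)]
    exact max_le (abs_nonneg y) (neg_le_abs y)
  · rw [if_neg hat.not_gt, neg_zero]
    refine (hasDerivAt_const t 0).congr_of_eventuallyEq ?_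
    filter_upwards [ha.continuousAt.eventually (eventually_gt_nhds hat)] with s hs
    exact max_eq_left (by linarith)

end AbsComp

section ConstraintViolation

variable {E ι κ : Type*} [Fintype ι] [Fintype κ]

def constraintViolation (h : ι → E → ℝ) (g : κ → E → ℝ) (x : E) : ℝ :=
  (∑ i, |h i x|) + ∑ i, max 0 (-g i x)

variable [AddCommGroup E] [Module ℝ E] {h : ι → E → ℝ} {g : κ → E → ℝ} {x d : E}

theorem hasLineDerivAt_constraintViolation {h' : ι → ℝ} {g' : κ → ℝ}
    (hh : ∀ i, HasLineDerivAt ℝ (h i) (h' i) x d) (hg : ∀ i, HasLineDerivAt ℝ (g i) (g' i) x d)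
    (hh0 : ∀ i, h i x = 0 → h' i = 0) (hg0 : ∀ i, g i x = 0 → g' i = 0) :
    HasLineDerivAt ℝ (constraintViolation h g)
      ((∑ i, SignType.sign (h i x) * h' i) - ∑ i, if g i x < 0 then g' i else 0) x d := by
  have habs := HasDerivAt.fun_sum (u := Finset.univ) fun i _ =>
    (hh i).abs_of_eq_zero_imp (by simpa using hh0 i)
  have hmax := HasDerivAt.fun_sum (u := Finset.univ) fun i _ =>
    (hg i).max_zero_neg (by simpa using hg0 i)
  simpa [HasLineDerivAt, constraintViolation, sub_eq_add_neg, Pi.add_def] using habs.add hmax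

end ConstraintViolation

theorem HasGradientAt.hasLineDerivAt {E : Type*} [NormedAddCommGroup E] [InnerProductSpace ℝ E]
    [CompleteSpace E] {f : E → ℝ} {f' x : E} (hf : HasGradientAt f f' x) (d : E) :
    HasLineDerivAt ℝ f ⟪f', d⟫ x d :=
  hf.hasFDerivAt.hasLineDerivAt d

theorem sub_mul_eq_sign_mul_of_complementarity {u v y p : ℝ} (huv : 1 - u - v = 0)
    (hcu : u * (|y| - y) = 0) (hcv : v * (|y| + y) = 0) (hp : y = 0 → p = 0) :
    (u - v) * p = SignType.sign y * p := by
  rcases lt_trichotomy y 0 with hy | hy | hy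
  · rw [abs_of_neg hy] at hcu
    have hu : u = 0 := (mul_eq_zero.1 hcu).resolve_right (by linarith)
    simp [hy, hu, show v = 1 by linarith]
  · simp [hp hy]
  · rw [abs_of_pos hy] at hcv
    have hv : v = 0 := (mul_eq_zero.1 hcv).resolve_right (by linarith)
    simp [hy, hv, show u = 1 by linarith]

theorem mul_eq_ite_of_complementarity {s t y p : ℝ} (hst : 1 - s - t = 0)
    (hcs : s * (max 0 (-y) + y) = 0) (hct : t * max 0 (-y) = 0) (hp : y = 0 → p = 0) :
    s * p = if y < 0 then p else 0 := by
  rcases lt_trichotomy y 0 with hy | hy | hy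
  · rw [max_eq_right (by linarith)] at hct
    have ht : t = 0 := (mul_eq_zero.1 hct).resolve_right (by linarith)
    simp [hy, show s = 1 by linarith]
  · simp [hp hy]
  · rw [max_eq_left (by linarith), zero_add] at hcs
    simp [hy.not_gt, (mul_eq_zero.1 hcs).resolve_right hy.ne']

theorem inner_eq_zero_of_kkt_of_isLocalMin_constraintViolation {E ι κ : Type*} [Fintype ι]
    [Fintype κ] [NormedAddCommGroup E] [InnerProductSpace ℝ E] [CompleteSpace E]
    {h : ι → E → ℝ} {g : κ → E → ℝ} {x f' d : E} {h' : ι → E} {g' : κ → E}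
    (hh : ∀ i, HasGradientAt (h i) (h' i) x) (hg : ∀ i, HasGradientAt (g i) (g' i) x)
    {ρ : ℝ} (hρ : ρ ≠ 0) {u v : ι → ℝ} {s t : κ → ℝ}
    (hstat : ρ • f' + (∑ i, (u i - v i) • h' i) - ∑ i, s i • g' i = 0)
    (huv : ∀ i, 1 - u i - v i = 0) (hst : ∀ i, 1 - s i - t i = 0)
    (hcu : ∀ i, u i * (|h i x| - h i x) = 0) (hcv : ∀ i, v i * (|h i x| + h i x) = 0)
    (hcs : ∀ i, s i * (max 0 (-g i x) + g i x) = 0) (hct : ∀ i, t i * max 0 (-g i x) = 0)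
    (hmin : IsLocalMin (constraintViolation h g) x)
    (hdh : ∀ i, h i x = 0 → ⟪h' i, d⟫ = 0) (hdg : ∀ i, g i x = 0 → ⟪g' i, d⟫ = 0) :
    ⟪f', d⟫ = 0 := by
  have hviolation := hmin.hasLineDerivAt_eq_zero <| hasLineDerivAt_constraintViolation
    (fun i => (hh i).hasLineDerivAt d) (fun i => (hg i).hasLineDerivAt d) hdh hdg
  have hinner : ρ * ⟪f', d⟫ + (∑ i, (u i - v i) * ⟪h' i, d⟫) - ∑ i, s i * ⟪g' i, d⟫ = 0 := by
    simpa [inner_add_left, inner_sub_left, sum_inner, real_inner_smul_left]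
      using congrArg (⟪·, d⟫) hstat
  rw [Finset.sum_congr rfl fun i _ =>
      sub_mul_eq_sign_mul_of_complementarity (huv i) (hcu i) (hcv i) (hdh i),
    Finset.sum_congr rfl fun i _ =>
      mul_eq_ite_of_complementarity (hst i) (hcs i) (hct i) (hdg i),
    add_sub_assoc, hviolation, add_zero] at hinner
  exact (mul_eq_zero.1 hinner).resolve_left hρ

theorem Submodule.mem_span_of_forall_inner_eq_zero {𝕜 E : Type*} [RCLike 𝕜]
    [NormedAddCommGroup E] [InnerProductSpace 𝕜 E] [FiniteDimensional 𝕜 E] {S : Set E} {w : E}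
    (h : ∀ d, (∀ v ∈ S, inner 𝕜 v d = 0) → inner 𝕜 w d = 0) : w ∈ span 𝕜 S := by
  rw [← (span 𝕜 S).orthogonal_orthogonal, mem_orthogonal]
  exact fun d hd =>
    inner_eq_zero_symm.1 (h d fun v hv => (mem_orthogonal _ _).1 hd v (subset_span hv))

theorem Submodule.exists_fun_of_mem_span_image {R M α : Type*} [Semiring R] [AddCommMonoid M]
    [Module R M] [Fintype α] {v : α → M} {s : Set α} {x : M} (hx : x ∈ span R (v '' s)) :
    ∃ c : α → R, (∀ i ∉ s, c i = 0) ∧ ∑ i, c i • v i = x := by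
  obtain ⟨l, hl, rfl⟩ := (Finsupp.mem_span_image_iff_linearCombination R).1 hx
  refine ⟨l, (Finsupp.mem_supported' R l).1 hl, ?_⟩
  rw [Finsupp.linearCombination_apply, Finsupp.sum_fintype _ _ fun i => zero_smul R (v i)]

theorem mul_eq_zero_of_sum_mul_eq_zero {R ι : Type*} [Semiring R] [PartialOrder R]
    [IsOrderedRing R] [Fintype ι] {a b : ι → R} (ha : ∀ i, 0 ≤ a i) (hb : ∀ i, 0 ≤ b i)
    (h : ∑ i, a i * b i = 0) (i : ι) : a i * b i = 0 :=
  congrFun ((Fintype.sum_eq_zero_iff_of_nonneg fun j => mul_nonneg (ha j) (hb j)).1 h) i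

theorem stmt7_general {n mE mI : ℕ}
    (f : EuclideanSpace ℝ (Fin n) → ℝ)
    (h : Fin mE → EuclideanSpace ℝ (Fin n) → ℝ)
    (g : Fin mI → EuclideanSpace ℝ (Fin n) → ℝ)
    (hh : ∀ i, ContDiff ℝ 1 (h i)) (hg : ∀ i, ContDiff ℝ 1 (g i))
    (ρ : ℝ) (hρ : 0 < ρ)
    (xs : EuclideanSpace ℝ (Fin n))
    (u v : Fin mE → ℝ) (s t : Fin mI → ℝ)
    -- KKT conditions of (R_ρ) at (x*, |h(x*)|, max{0,−g(x*)}) with (u*,v*,s*,t*)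
    (hu : ∀ i, 0 ≤ u i) (hv : ∀ i, 0 ≤ v i) (hs : ∀ i, 0 ≤ s i) (ht : ∀ i, 0 ≤ t i)
    (hstat : ρ • gradient f xs + (∑ i, (u i - v i) • gradient (h i) xs)
        - (∑ i, s i • gradient (g i) xs) = 0)
    (huv : ∀ i, 1 - u i - v i = 0) (hst : ∀ i, 1 - s i - t i = 0)
    (hcu : ∑ i, u i * (|h i xs| - h i xs) = 0)
    (hcv : ∑ i, v i * (|h i xs| + h i xs) = 0)
    (hcs : ∑ i, s i * (max 0 (-(g i xs)) + g i xs) = 0)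
    (hct : ∑ i, t i * max 0 (-(g i xs)) = 0)
    -- x* is a local minimizer of the ℓ₁ constraint violation
    (hmin : IsLocalMin (fun x => (∑ i, |h i x|) + ∑ i, max 0 (-(g i x))) xs) :
    ∃ (μh : Fin mE → ℝ) (dl : Fin mI → ℝ),
      (∀ i, h i xs ≠ 0 → μh i = 0) ∧
      (∀ i, g i xs ≠ 0 → dl i = 0) ∧
      gradient f xs - (∑ i, μh i • gradient (h i) xs)
        - (∑ i, dl i • gradient (g i) xs) = 0 := by
  have hgrad {φ : EuclideanSpace ℝ (Fin n) → ℝ} (hφ : ContDiff ℝ 1 φ) :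
      HasGradientAt φ (gradient φ xs) xs :=
    (hφ.differentiable one_ne_zero xs).hasGradientAt
  let V := Sum.elim (fun i => gradient (h i) xs) (fun i => gradient (g i) xs)
  let active := {j | Sum.elim (fun i => h i xs) (fun i => g i xs) j = 0}
  have hspan : gradient f xs ∈ Submodule.span ℝ (V '' active) :=
    Submodule.mem_span_of_forall_inner_eq_zero fun d hd =>
      inner_eq_zero_of_kkt_of_isLocalMin_constraintViolation (fun i => hgrad (hh i))
        (fun i => hgrad (hg i)) hρ.ne' hstat huv hst
        (mul_eq_zero_of_sum_mul_eq_zero hu (fun _ => sub_nonneg.2 (le_abs_self _)) hcu)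
        (mul_eq_zero_of_sum_mul_eq_zero hv (fun _ => neg_le_iff_add_nonneg'.1 (neg_abs_le _)) hcv)
        (mul_eq_zero_of_sum_mul_eq_zero hs (fun _ => neg_le_iff_add_nonneg.1 (le_max_right _ _))
          hcs)
        (mul_eq_zero_of_sum_mul_eq_zero ht (fun _ => le_max_left _ _) hct)
        hmin (fun i hi => hd _ ⟨.inl i, hi, rfl⟩) (fun i hi => hd _ ⟨.inr i, hi, rfl⟩)
  obtain ⟨c, hc_active, hc⟩ := Submodule.exists_fun_of_mem_span_image hspan
  refine ⟨c ∘ .inl, c ∘ .inr, fun i => hc_active (.inl i), fun i => hc_active (.inr i), ?_⟩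
  rw [← hc, Fintype.sum_sum_type, sub_sub]
  exact sub_self _

/-- If `(x*, |h(x*)|, max{0,−g(x*)})` is a KKT point of (R_ρ) with
multipliers `(u*,v*,s*,t*)` and `x*` is a local minimizer of the ℓ₁ constraint
violation `c`, then `x*` is a KKT point of the equality constrained problem
`min f(x) s.t. h_i(x)=0 (i ∈ I_h*), g_i(x)=0 (i ∈ I_g*)`: there are multipliers
(extended by `0` outside the active sets) such that
`∇f(x*) − Σ_{i∈I_h*} μ̂_i ∇h_i(x*) − Σ_{i∈I_g*} λ̂_i ∇g_i(x*) = 0`. -/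
theorem stmt7 {n mE mI : ℕ}
    (f : EuclideanSpace ℝ (Fin n) → ℝ)
    (h : Fin mE → EuclideanSpace ℝ (Fin n) → ℝ)
    (g : Fin mI → EuclideanSpace ℝ (Fin n) → ℝ)
    (hf : ContDiff ℝ 1 f) (hh : ∀ i, ContDiff ℝ 1 (h i)) (hg : ∀ i, ContDiff ℝ 1 (g i))
    (ρ : ℝ) (hρ : 0 < ρ)
    (xs : EuclideanSpace ℝ (Fin n))
    (u v : Fin mE → ℝ) (s t : Fin mI → ℝ)
    -- KKT conditions of (R_ρ) at (x*, |h(x*)|, max{0,−g(x*)}) with (u*,v*,s*,t*)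
    (hu : ∀ i, 0 ≤ u i) (hv : ∀ i, 0 ≤ v i) (hs : ∀ i, 0 ≤ s i) (ht : ∀ i, 0 ≤ t i)
    (hstat : ρ • gradient f xs + (∑ i, (u i - v i) • gradient (h i) xs)
        - (∑ i, s i • gradient (g i) xs) = 0)
    (huv : ∀ i, 1 - u i - v i = 0) (hst : ∀ i, 1 - s i - t i = 0)
    (hcu : ∑ i, u i * (|h i xs| - h i xs) = 0)
    (hcv : ∑ i, v i * (|h i xs| + h i xs) = 0)
    (hcs : ∑ i, s i * (max 0 (-(g i xs)) + g i xs) = 0)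
    (hct : ∑ i, t i * max 0 (-(g i xs)) = 0)
    -- x* is a local minimizer of the ℓ₁ constraint violation
    (hmin : IsLocalMin (fun x => (∑ i, |h i x|) + ∑ i, max 0 (-(g i x))) xs) :
    ∃ (μh : Fin mE → ℝ) (dl : Fin mI → ℝ),
      (∀ i, h i xs ≠ 0 → μh i = 0) ∧
      (∀ i, g i xs ≠ 0 → dl i = 0) ∧
      gradient f xs - (∑ i, μh i • gradient (h i) xs)
        - (∑ i, dl i • gradient (g i) xs) = 0 :=
  stmt7_general f h g hh hg ρ hρ xs u v s t hu hv hs ht hstat huv hst hcu hcv hcs hct hmin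
end

section
/- Let f:ℝⁿ→ℝ, h:ℝⁿ→ℝ^{mE}, g:ℝⁿ→ℝ^{mI} be continuously differentiable, ρ>0, x ∈ ℝⁿ, and let B ∈ ℝ^{n×n} be symmetric with dᵀBd ≥ m‖d‖² for all d, where m>0. Suppose d ∈ ℝⁿ and multipliers u, v ∈ ℝ^{mE} with components in [0,1] and s ∈ ℝ^{mI} with components in [0,1] satisfy the stationarity equation ρ∇f(x) + Bd + ∇h(x)(u−v) − ∇g(x)s = 0, where ∇h(x), ∇g(x) are the matrices whose columns are ∇h_i(x), ∇g_i(x). If ‖∇f(x)‖ ≤ G, ‖∇h_i(x)‖ ≤ G for all i, and ‖∇g_i(x)‖ ≤ G for all i, then ‖d‖ ≤ G(ρ + mE + mI)/m. -/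
open RealInnerProductSpace

/-- bound on the SQP direction.  If `B` is symmetric with
`dᵀBd ≥ m‖d‖²` (`m > 0`), the multipliers `u,v,s` have components in `[0,1]`,
the stationarity equation `ρ∇f(x) + Bd + ∇h(x)(u−v) − ∇g(x)s = 0` holds and all
gradients of `f, h_i, g_i` at `x` have norm at most `G`, then
`‖d‖ ≤ G(ρ + mE + mI)/m`. -/
theorem stmt12 {n mE mI : ℕ}
    (f : EuclideanSpace ℝ (Fin n) → ℝ)
    (h : Fin mE → EuclideanSpace ℝ (Fin n) → ℝ)
    (g : Fin mI → EuclideanSpace ℝ (Fin n) → ℝ)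
    (hf : ContDiff ℝ 1 f) (hh : ∀ i, ContDiff ℝ 1 (h i)) (hg : ∀ i, ContDiff ℝ 1 (g i))
    (ρ : ℝ) (hρ : 0 < ρ) (x : EuclideanSpace ℝ (Fin n))
    (B : EuclideanSpace ℝ (Fin n) →L[ℝ] EuclideanSpace ℝ (Fin n))
    (hBsymm : ∀ a b : EuclideanSpace ℝ (Fin n), ⟪B a, b⟫ = ⟪a, B b⟫)
    (m : ℝ) (hm : 0 < m)
    (hBcoer : ∀ e : EuclideanSpace ℝ (Fin n), m * ‖e‖ ^ 2 ≤ ⟪e, B e⟫)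
    (d : EuclideanSpace ℝ (Fin n))
    (u v : Fin mE → ℝ) (s : Fin mI → ℝ)
    (hu : ∀ i, u i ∈ Set.Icc (0:ℝ) 1) (hv : ∀ i, v i ∈ Set.Icc (0:ℝ) 1)
    (hs : ∀ i, s i ∈ Set.Icc (0:ℝ) 1)
    (hstat : ρ • gradient f x + B d + (∑ i, (u i - v i) • gradient (h i) x)
        - (∑ i, s i • gradient (g i) x) = 0)
    (G : ℝ) (hGf : ‖gradient f x‖ ≤ G)
    (hGh : ∀ i, ‖gradient (h i) x‖ ≤ G) (hGg : ∀ i, ‖gradient (g i) x‖ ≤ G) :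
    ‖d‖ ≤ G * (ρ + mE + mI) / m := by
  have hG0 : 0 ≤ G := le_trans (norm_nonneg _) hGf
  set w : EuclideanSpace ℝ (Fin n) :=
    ρ • gradient f x + (∑ i, (u i - v i) • gradient (h i) x)
      - (∑ i, s i • gradient (g i) x) with hw
  have hBd : B d = -w := by
    have h0 : w + B d = ρ • gradient f x + B d + (∑ i, (u i - v i) • gradient (h i) x)
        - (∑ i, s i • gradient (g i) x) := by rw [hw]; abel
    rw [hstat] at h0
    exact eq_neg_of_add_eq_zero_right h0
  have hwnorm : ‖w‖ ≤ G * (ρ + mE + mI) := by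
    have h1 : ‖∑ i, (u i - v i) • gradient (h i) x‖ ≤ (mE : ℝ) * G := by
      calc ‖∑ i, (u i - v i) • gradient (h i) x‖ ≤ ∑ i, ‖(u i - v i) • gradient (h i) x‖ :=
            norm_sum_le _ _
        _ ≤ ∑ _i : Fin mE, G := by
            apply Finset.sum_le_sum; intro i _
            rw [norm_smul]
            have h2 : |u i - v i| ≤ 1 := by
              obtain ⟨hu1, hu2⟩ := hu i; obtain ⟨hv1, hv2⟩ := hv i
              rw [abs_le]; constructor <;> linarith
            calc ‖u i - v i‖ * ‖gradient (h i) x‖ ≤ 1 * G := by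
                  apply mul_le_mul h2 (hGh i) (norm_nonneg _) zero_le_one
              _ = G := one_mul G
        _ = (mE : ℝ) * G := by simp [Finset.sum_const, mul_comm]
    have h2 : ‖∑ i, s i • gradient (g i) x‖ ≤ (mI : ℝ) * G := by
      calc ‖∑ i, s i • gradient (g i) x‖ ≤ ∑ i, ‖s i • gradient (g i) x‖ := norm_sum_le _ _
        _ ≤ ∑ _i : Fin mI, G := by
            apply Finset.sum_le_sum; intro i _
            rw [norm_smul]
            have h3 : |s i| ≤ 1 := by
              obtain ⟨hs1, hs2⟩ := hs i
              rw [abs_le]; constructor <;> linarith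
            calc ‖s i‖ * ‖gradient (g i) x‖ ≤ 1 * G :=
                  mul_le_mul h3 (hGg i) (norm_nonneg _) zero_le_one
              _ = G := one_mul G
        _ = (mI : ℝ) * G := by simp [Finset.sum_const, mul_comm]
    calc ‖w‖ ≤ ‖ρ • gradient f x + (∑ i, (u i - v i) • gradient (h i) x)‖
            + ‖∑ i, s i • gradient (g i) x‖ := norm_sub_le _ _
      _ ≤ ‖ρ • gradient f x‖ + ‖∑ i, (u i - v i) • gradient (h i) x‖
            + ‖∑ i, s i • gradient (g i) x‖ := by gcongr; exact norm_add_le _ _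
      _ ≤ ρ * G + (mE : ℝ) * G + (mI : ℝ) * G := by
          gcongr
          rw [norm_smul, Real.norm_eq_abs, abs_of_pos hρ]
          exact mul_le_mul_of_nonneg_left hGf hρ.le
      _ = G * (ρ + mE + mI) := by ring
  have key : m * ‖d‖ ^ 2 ≤ ‖d‖ * (G * (ρ + mE + mI)) := by
    calc m * ‖d‖ ^ 2 ≤ ⟪d, B d⟫ := hBcoer d
      _ = ⟪d, -w⟫ := by rw [hBd]
      _ ≤ ‖d‖ * ‖-w‖ := real_inner_le_norm _ _
      _ ≤ ‖d‖ * (G * (ρ + mE + mI)) := by rw [norm_neg]; gcongr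
  rcases eq_or_lt_of_le (norm_nonneg d) with hd | hd
  · rw [← hd]; positivity
  · rw [le_div_iff₀ hm]
    have : m * ‖d‖ * ‖d‖ ≤ ‖d‖ * (G * (ρ + mE + mI)) := by nlinarith [key]
    nlinarith [this]
end

section
/- Let h:ℝⁿ→ℝ^{mE} and g:ℝⁿ→ℝ^{mI} be continuously differentiable, x ∈ ℝⁿ, and let B ∈ ℝ^{n×n} be symmetric positive semidefinite. If d = 0 is a global minimizer over ℝⁿ of the function d ↦ ½dᵀBd + c'(x;d), then d = 0 is a global minimizer of d ↦ c'(x;d); that is, c'(x;d) ≥ c(x) for every d ∈ ℝⁿ (note that c'(x;0) = c(x)). -/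
lemma abs_conv (a b t : ℝ) (ht0 : 0 ≤ t) (ht1 : t ≤ 1) :
    |a + t * b| ≤ (1 - t) * |a| + t * |a + b| := by
  have h1 : a + t * b = (1 - t) * a + t * (a + b) := by ring
  calc |a + t * b| = |(1 - t) * a + t * (a + b)| := by rw [h1]
    _ ≤ |(1 - t) * a| + |t * (a + b)| := abs_add_le _ _
    _ = (1 - t) * |a| + t * |a + b| := by
        rw [abs_mul, abs_mul, abs_of_nonneg (by linarith), abs_of_nonneg ht0]

lemma max_conv (a b t : ℝ) (ht0 : 0 ≤ t) (ht1 : t ≤ 1) :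
    max 0 (-(a + t * b)) ≤ (1 - t) * max 0 (-a) + t * max 0 (-(a + b)) := by
  have h1 : -a ≤ max 0 (-a) := le_max_right _ _
  have h2 : -(a + b) ≤ max 0 (-(a + b)) := le_max_right _ _
  have h3 : (0:ℝ) ≤ max 0 (-a) := le_max_left _ _
  have h4 : (0:ℝ) ≤ max 0 (-(a + b)) := le_max_left _ _
  apply max_le
  · nlinarith
  · nlinarith


open RealInnerProductSpace

/-- If `d = 0` is a global minimizer of `d ↦ ½dᵀBd + c'(x;d)` with
`B` symmetric positive semidefinite, then `d = 0` is a global minimizer of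
`d ↦ c'(x;d)`, i.e. `c'(x;d) ≥ c(x)` for all `d` (and `c'(x;0) = c(x)`). -/
theorem stmt16 {n mE mI : ℕ}
    (h : Fin mE → EuclideanSpace ℝ (Fin n) → ℝ)
    (g : Fin mI → EuclideanSpace ℝ (Fin n) → ℝ)
    (hh : ∀ i, ContDiff ℝ 1 (h i)) (hg : ∀ i, ContDiff ℝ 1 (g i))
    (x : EuclideanSpace ℝ (Fin n))
    (B : EuclideanSpace ℝ (Fin n) →L[ℝ] EuclideanSpace ℝ (Fin n))
    (hBsymm : ∀ a b : EuclideanSpace ℝ (Fin n), ⟪B a, b⟫ = ⟪a, B b⟫)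
    (hBpsd : ∀ e : EuclideanSpace ℝ (Fin n), 0 ≤ ⟪e, B e⟫)
    (hmin : ∀ d : EuclideanSpace ℝ (Fin n),
      (1/2) * ⟪(0 : EuclideanSpace ℝ (Fin n)), B 0⟫ +
        ((∑ i, |h i x + ⟪gradient (h i) x, (0 : EuclideanSpace ℝ (Fin n))⟫|) +
          ∑ i, max 0 (-(g i x + ⟪gradient (g i) x, (0 : EuclideanSpace ℝ (Fin n))⟫))) ≤
      (1/2) * ⟪d, B d⟫ +
        ((∑ i, |h i x + ⟪gradient (h i) x, d⟫|) +
          ∑ i, max 0 (-(g i x + ⟪gradient (g i) x, d⟫)))) :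
    ((∑ i, |h i x + ⟪gradient (h i) x, (0 : EuclideanSpace ℝ (Fin n))⟫|) +
        ∑ i, max 0 (-(g i x + ⟪gradient (g i) x, (0 : EuclideanSpace ℝ (Fin n))⟫))
      = (∑ i, |h i x|) + ∑ i, max 0 (-(g i x))) ∧
    ∀ d : EuclideanSpace ℝ (Fin n),
      (∑ i, |h i x|) + (∑ i, max 0 (-(g i x))) ≤
      (∑ i, |h i x + ⟪gradient (h i) x, d⟫|) +
        ∑ i, max 0 (-(g i x + ⟪gradient (g i) x, d⟫)) := by

  have hz : ∀ v : EuclideanSpace ℝ (Fin n), ⟪v, (0 : EuclideanSpace ℝ (Fin n))⟫ = 0 :=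
    fun v => inner_zero_right v
  constructor
  · simp [hz]
  · intro d
    set A := (∑ i, |h i x|) + ∑ i, max 0 (-(g i x)) with hA
    set P := (∑ i, |h i x + ⟪gradient (h i) x, d⟫|) +
        ∑ i, max 0 (-(g i x + ⟪gradient (g i) x, d⟫)) with hP
    set Q := ⟪d, B d⟫ with hQdef
    have hQ0 : 0 ≤ Q := hBpsd d
    apply le_of_forall_pos_le_add
    intro ε hε
    set t := min 1 (ε / (Q + 1)) with htdef
    have ht0 : 0 < t := lt_min one_pos (div_pos hε (by linarith))
    have ht1 : t ≤ 1 := min_le_left _ _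
    have htε : t * (Q + 1) ≤ ε := by
      have := min_le_right 1 (ε / (Q + 1))
      calc t * (Q + 1) ≤ (ε / (Q + 1)) * (Q + 1) := by
            apply mul_le_mul_of_nonneg_right this (by linarith)
        _ = ε := by field_simp
    have key := hmin (t • d)
    have hq : ⟪t • d, B (t • d)⟫ = t ^ 2 * Q := by
      rw [map_smul, real_inner_smul_left, real_inner_smul_right, hQdef]; ring
    simp only [hz, map_zero, add_zero, mul_zero] at key
    rw [hq] at key
    have hsmul : ∀ v : EuclideanSpace ℝ (Fin n), ⟪v, t • d⟫ = t * ⟪v, d⟫ :=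
      fun v => real_inner_smul_right v d t
    simp only [hsmul] at key
    have conv1 : (∑ i, |h i x + t * ⟪gradient (h i) x, d⟫|) ≤
        (1 - t) * (∑ i, |h i x|) + t * (∑ i, |h i x + ⟪gradient (h i) x, d⟫|) := by
      rw [Finset.mul_sum, Finset.mul_sum, ← Finset.sum_add_distrib]
      exact Finset.sum_le_sum fun i _ => abs_conv _ _ _ ht0.le ht1
    have conv2 : (∑ i, max 0 (-(g i x + t * ⟪gradient (g i) x, d⟫))) ≤
        (1 - t) * (∑ i, max 0 (-(g i x))) + t * (∑ i, max 0 (-(g i x + ⟪gradient (g i) x, d⟫))) := by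
      rw [Finset.mul_sum, Finset.mul_sum, ← Finset.sum_add_distrib]
      exact Finset.sum_le_sum fun i _ => max_conv _ _ _ ht0.le ht1
    -- key : A ≤ (1/2) * (t^2 * Q) + (sums at t•d)
    have combo : A ≤ (1/2) * (t ^ 2 * Q) + ((1 - t) * A + t * P) := by
      calc A ≤ (1/2) * (t ^ 2 * Q) +
          ((∑ i, |h i x + t * ⟪gradient (h i) x, d⟫|) +
            ∑ i, max 0 (-(g i x + t * ⟪gradient (g i) x, d⟫))) := by
            rw [hA]; linarith [key]
        _ ≤ (1/2) * (t ^ 2 * Q) + ((1 - t) * A + t * P) := by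
            rw [hA, hP]; nlinarith [conv1, conv2]
    have step : t * A ≤ (1/2) * (t ^ 2 * Q) + t * P := by nlinarith [combo]
    have final : A ≤ (t / 2) * Q + P := by
      nlinarith [step, ht0]
    nlinarith [final, htε, hQ0, ht0]
end

section
/- (Quadratic SQP step.) Let f:ℝⁿ→ℝ, h:ℝⁿ→ℝ^{mE}, g:ℝⁿ→ℝ^{mI} be twice continuously differentiable with locally Lipschitz second derivatives near x*. Let E ⊆ {1,…,mE} and A ⊆ {1,…,mI}, suppose h_i(x*)=0 for i∈E and g_i(x*)=0 for i∈A, the vectors {∇h_i(x*) : i∈E} ∪ {∇g_i(x*) : i∈A} are linearly independent, and there are multipliers μ* ∈ ℝ^E, λ* ∈ ℝ^A with ∇f(x*) − Σ_{i∈E} μ_i* ∇h_i(x*) − Σ_{i∈A} λ_i* ∇g_i(x*) = 0 and dᵀ∇²ₓₓL(x*,μ*,λ*)d ≥ γ‖d‖² for some γ>0 and all d with ∇h_i(x*)ᵀd = 0 (i∈E) and ∇g_i(x*)ᵀd = 0 (i∈A), where L(x,μ,λ) = f(x) − Σ_{i∈E} μ_i h_i(x) − Σ_{i∈A} λ_i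 g_i(x). Let sequences x_ℓ → x*, μ_ℓ, λ_ℓ with ‖μ_ℓ − μ*‖ + ‖λ_ℓ − λ*‖ = O(‖x_ℓ − x*‖), and directions d_ℓ satisfy, for every ℓ: ∇f(x_ℓ) + ∇²ₓₓL(x_ℓ,μ_ℓ,λ_ℓ) d_ℓ − Σ_{i∈E} μ_{ℓ+1,i} ∇h_i(x_ℓ) − Σ_{i∈A} λ_{ℓ+1,i} ∇g_i(x_ℓ) = 0, h_i(x_ℓ) + ∇h_i(x_ℓ)ᵀd_ℓ = 0 for i∈E, and g_i(x_ℓ) + ∇g_i(x_ℓ)ᵀd_ℓ = 0 for i∈A, with μ_{ℓ+1} → μ* and λ_{ℓ+1} → λ*. Then ‖x_ℓ + d_ℓ − x*‖ = O(‖x_ℓ − x*‖²). -/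
/-!
With exact Lagrangian Hessians, the SQP step is precisely Newton's method for the KKT map
`(x, w) ↦ (∇ₓL(x, w), c(x))` of the active constraints `c = (h_E, g_A)`, started at
`z_ℓ = (x_ℓ, (μ_ℓ, λ_ℓ))` and landing at `(x_ℓ + d_ℓ, (μ_{ℓ+1}, λ_{ℓ+1}))`. Linear independence
of the active gradients and second-order sufficiency make the KKT matrix at
`z* = (x*, (μ*, λ*))` invertible, and the Lipschitz second derivatives make the KKT Jacobian
Lipschitz near `z*`; the standard Newton estimate then gives
`‖z_ℓ + Δ_ℓ - z*‖ = O(‖z_ℓ - z*‖²)`. Finally `‖z_ℓ - z*‖ = O(‖x_ℓ - x*‖)` because the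
multiplier error is `O(‖x_ℓ - x*‖)`.
-/

open RealInnerProductSpace Filter

open InnerProductSpace ContinuousLinearMap Asymptotics Topology Metric

section Newton

variable {Z : Type*} [NormedAddCommGroup Z] [NormedSpace ℝ Z]
  {Φ : Z → Z} {DΦ : Z → Z →L[ℝ] Z} {z₀ : Z} {r K : ℝ}

theorem norm_sub_sub_fderiv_apply_le_sq (hK : 0 ≤ K)
    (hdiff : ∀ z ∈ ball z₀ r, HasFDerivAt Φ (DΦ z) z)
    (hlip : ∀ z ∈ ball z₀ r, ‖DΦ z - DΦ z₀‖ ≤ K * ‖z - z₀‖) {z : Z} (hz : z ∈ ball z₀ r) :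
    ‖Φ z - Φ z₀ - DΦ z₀ (z - z₀)‖ ≤ K * ‖z - z₀‖ ^ 2 := by
  have hsub : closedBall z₀ ‖z - z₀‖ ⊆ ball z₀ r :=
    closedBall_subset_ball (mem_ball_iff_norm.1 hz)
  have := (convex_closedBall z₀ ‖z - z₀‖).norm_image_sub_le_of_norm_hasFDerivWithin_le'
    (fun w hw => (hdiff w (hsub hw)).hasFDerivWithinAt)
    (fun w hw => (hlip w (hsub hw)).trans
      (mul_le_mul_of_nonneg_left (mem_closedBall_iff_norm.1 hw) hK))
    (mem_closedBall_self (norm_nonneg _)) (mem_closedBall_iff_norm.2 le_rfl)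
  rwa [mul_assoc, ← sq] at this

theorem norm_newton_step_le (hK : 0 ≤ K) (hdiff : ∀ z ∈ ball z₀ r, HasFDerivAt Φ (DΦ z) z)
    (hlip : ∀ z ∈ ball z₀ r, ‖DΦ z - DΦ z₀‖ ≤ K * ‖z - z₀‖) (hΦ₀ : Φ z₀ = 0)
    {S : ℝ} (hS₀ : 0 ≤ S) (hS : ∀ v, ‖v‖ ≤ S * ‖DΦ z₀ v‖)
    {z Δ : Z} (hz : z ∈ ball z₀ r) (hsmall : S * K * ‖z - z₀‖ ≤ 1 / 2)
    (hN : Φ z + DΦ z Δ = 0) :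
    ‖z + Δ - z₀‖ ≤ 4 * S * K * ‖z - z₀‖ ^ 2 := by
  set e := z - z₀
  set e' := z + Δ - z₀
  have hsplit : DΦ z₀ e' = -(Φ z - Φ z₀ - DΦ z₀ e) + (DΦ z₀ - DΦ z) (e' - e) := by
    have hΔ : e' - e = Δ := by simp only [e, e']; abel
    rw [hΔ, show e' = e + Δ by rw [← hΔ]; abel, map_add, sub_apply, hΦ₀,
      eq_neg_of_add_eq_zero_right hN]
    abel
  have htaylor := norm_sub_sub_fderiv_apply_le_sq hK hdiff hlip hz
  have hvar : ‖(DΦ z₀ - DΦ z) (e' - e)‖ ≤ K * ‖e‖ * (‖e'‖ + ‖e‖) := by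
    refine (le_opNorm _ _).trans (mul_le_mul ?_ (norm_sub_le _ _) (norm_nonneg _) (by positivity))
    rw [norm_sub_rev]
    exact hlip z hz
  have he' : ‖e'‖ ≤ S * (K * ‖e‖ ^ 2 + K * ‖e‖ * (‖e'‖ + ‖e‖)) := by
    refine (hS e').trans (mul_le_mul_of_nonneg_left ?_ hS₀)
    rw [hsplit]
    exact (norm_add_le _ _).trans (add_le_add (by rwa [norm_neg]) hvar)
  -- as `S * K * ‖e‖ ≤ 1 / 2`, the `‖e'‖` on the right is absorbed into the left-hand side
  nlinarith [norm_nonneg e', norm_nonneg e, mul_nonneg (mul_nonneg hS₀ hK) (norm_nonneg e)]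

theorem isBigO_newton_step (hdiff : ∀ᶠ z in 𝓝 z₀, HasFDerivAt Φ (DΦ z) z)
    (hlip : (fun z => DΦ z - DΦ z₀) =O[𝓝 z₀] (· - z₀)) (hinv : (DΦ z₀).IsInvertible)
    (hΦ₀ : Φ z₀ = 0) {z Δ : ℕ → Z} (hz : Tendsto z atTop (𝓝 z₀))
    (hN : ∀ ℓ, Φ (z ℓ) + DΦ (z ℓ) (Δ ℓ) = 0) :
    (fun ℓ => z ℓ + Δ ℓ - z₀) =O[atTop] (fun ℓ => ‖z ℓ - z₀‖ ^ 2) := by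
  obtain ⟨K, hK, hKlip⟩ := hlip.exists_nonneg
  obtain ⟨r, hr, hball⟩ := eventually_nhds_iff_ball.1 (hdiff.and hKlip.bound)
  obtain ⟨T, hT⟩ := hinv
  set S := ‖(T.symm : Z →L[ℝ] Z)‖
  have hS : ∀ v, ‖v‖ ≤ S * ‖DΦ z₀ v‖ := fun v => by
    rw [← hT]
    simpa using (T.symm : Z →L[ℝ] Z).le_opNorm (T v)
  have hsmall : Tendsto (fun ℓ => S * K * ‖z ℓ - z₀‖) atTop (𝓝 0) := by
    simpa using (tendsto_iff_norm_sub_tendsto_zero.1 hz).const_mul (S * K)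
  refine IsBigO.of_bound (4 * S * K) ?_
  filter_upwards [hz (ball_mem_nhds z₀ hr), hsmall.eventually (ge_mem_nhds one_half_pos)]
    with ℓ hℓ hℓsmall
  simpa using norm_newton_step_le hK (fun w hw => (hball w hw).1) (fun w hw => (hball w hw).2)
    hΦ₀ (norm_nonneg _) hS hℓ hℓsmall (hN ℓ)

end Newton

theorem Asymptotics.IsBigO.comp_fst_sub {X Y E : Type*} [NormedAddCommGroup X]
    [NormedAddCommGroup Y] [NormedAddCommGroup E] {F : X → E} {a : X} (b : Y)
    (hF : F =O[𝓝 a] (· - a)) : (fun z : X × Y => F z.1) =O[𝓝 (a, b)] (· - (a, b)) :=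
  (hF.comp_tendsto (continuous_fst.tendsto _)).trans (isBigO_fst_prod' (f' := (· - (a, b))))

def lagrangian {V ι : Type*} [Fintype ι] (f : V → ℝ) (c : ι → V → ℝ) (w : ι → ℝ) (x : V) : ℝ :=
  f x - ∑ j, w j * c j x

section Hessian

variable {V : Type*} [NormedAddCommGroup V] [InnerProductSpace ℝ V] [CompleteSpace V]

noncomputable def hessian (F : V → ℝ) (x : V) : V →L[ℝ] V := fderiv ℝ (gradient F) x

theorem inner_hessian_apply (F : V → ℝ) (x a b : V) :
    ⟪hessian F x a, b⟫ = iteratedFDeriv ℝ 2 F x ![a, b] := by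
  have : gradient F = (toDual ℝ V).symm ∘ fderiv ℝ F := rfl
  rw [hessian, this, LinearIsometryEquiv.comp_fderiv, iteratedFDeriv_two_apply]
  exact toDual_symm_apply

theorem norm_hessian_sub_le (F : V → ℝ) (x y : V) :
    ‖hessian F x - hessian F y‖ ≤ ‖iteratedFDeriv ℝ 2 F x - iteratedFDeriv ℝ 2 F y‖ := by
  refine opNorm_le_bound _ (norm_nonneg _) fun a => ?_
  rw [← (toDual ℝ V).norm_map]
  refine opNorm_le_bound _ (by positivity) fun b => ?_
  rw [toDual_apply_apply, sub_apply, inner_sub_left, inner_hessian_apply, inner_hessian_apply,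
    ← _root_.sub_apply]
  refine ((iteratedFDeriv ℝ 2 F x - iteratedFDeriv ℝ 2 F y).le_opNorm _).trans_eq ?_
  simp [Fin.prod_univ_two, mul_assoc]

theorem isBigO_hessian_sub_of_lipschitz {F : V → ℝ} {x₀ : V}
    (hF : ∃ U ∈ 𝓝 x₀, ∃ K : ℝ, ∀ a ∈ U, ∀ b ∈ U,
      ‖iteratedFDeriv ℝ 2 F a - iteratedFDeriv ℝ 2 F b‖ ≤ K * ‖a - b‖) :
    (fun x => hessian F x - hessian F x₀) =O[𝓝 x₀] (· - x₀) := by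
  obtain ⟨U, hU, K, hK⟩ := hF
  refine IsBigO.of_bound K (eventually_of_mem hU fun x hx => ?_)
  exact (norm_hessian_sub_le F x x₀).trans (hK x hx x₀ (mem_of_mem_nhds hU))

theorem ContDiff.gradient {F : V → ℝ} (hF : ContDiff ℝ 2 F) : ContDiff ℝ 1 (gradient F) :=
  (toDual ℝ V).symm.contDiff.comp (hF.fderiv_right (by norm_num))

theorem ContDiff.continuous_hessian {F : V → ℝ} (hF : ContDiff ℝ 2 F) : Continuous (hessian F) :=
  hF.gradient.continuous_fderiv one_ne_zero

variable {ι : Type*} [Fintype ι] {f : V → ℝ} {c : ι → V → ℝ}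

theorem gradient_lagrangian (hf : Differentiable ℝ f) (hc : ∀ j, Differentiable ℝ (c j))
    (w : ι → ℝ) :
    gradient (lagrangian f c w) = fun x => gradient f x - ∑ j, w j • gradient (c j) x := by
  funext x
  have hL : HasFDerivAt (lagrangian f c w) (fderiv ℝ f x - ∑ j, w j • fderiv ℝ (c j) x) x :=
    (hf x).hasFDerivAt.sub (HasFDerivAt.fun_sum fun j _ => (hc j x).hasFDerivAt.const_mul (w j))
  simp [gradient, hL.fderiv]

theorem hessian_lagrangian (hf : ContDiff ℝ 2 f) (hc : ∀ j, ContDiff ℝ 2 (c j)) (w : ι → ℝ)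
    (x : V) :
    hessian (lagrangian f c w) x = hessian f x - ∑ j, w j • hessian (c j) x := by
  have hdiff : ∀ {F : V → ℝ}, ContDiff ℝ 2 F → Differentiable ℝ (gradient F) :=
    fun hF => hF.gradient.differentiable one_ne_zero
  rw [hessian, gradient_lagrangian (hf.differentiable two_ne_zero)
    (fun j => (hc j).differentiable two_ne_zero)]
  exact ((hdiff hf x).hasFDerivAt.sub (HasFDerivAt.fun_sum fun j _ =>
    ((hdiff (hc j)) x).hasFDerivAt.const_smul (w j))).fderiv

end Hessian

section KKTOperator

variable {V : Type*} [NormedAddCommGroup V] [InnerProductSpace ℝ V] {ι : Type*} [Fintype ι]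

-- the KKT matrix `[[H, -Gᵀ], [G, 0]]`
noncomputable def kktOp (H : V →L[ℝ] V) (G : ι → V) : V × (ι → ℝ) →L[ℝ] V × (ι → ℝ) :=
  (H.comp (fst ℝ V _) - ∑ j, ((proj j).comp (snd ℝ V (ι → ℝ))).smulRight (G j)).prod
    (pi fun j => (innerSL ℝ (G j)).comp (fst ℝ V _))

@[simp]
theorem kktOp_apply (H : V →L[ℝ] V) (G : ι → V) (ζ : V × (ι → ℝ)) :
    kktOp H G ζ = (H ζ.1 - ∑ j, ζ.2 j • G j, fun j => ⟪G j, ζ.1⟫) := by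
  simp [kktOp]

theorem kktOp_sub (H H' : V →L[ℝ] V) (G G' : ι → V) :
    kktOp H G - kktOp H' G' = kktOp (H - H') (G - G') := by
  refine ContinuousLinearMap.ext fun ζ => ?_
  simp only [sub_apply, kktOp_apply, Prod.mk_sub_mk, Pi.sub_apply, smul_sub, inner_sub_left,
    Finset.sum_sub_distrib]
  congr 1
  abel

theorem norm_kktOp_le (H : V →L[ℝ] V) (G : ι → V) : ‖kktOp H G‖ ≤ ‖H‖ + ∑ j, ‖G j‖ := by
  refine opNorm_le_bound _ (by positivity) fun ζ => ?_
  have h1 : ‖ζ.1‖ ≤ ‖ζ‖ := norm_fst_le ζ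
  have h2 : ∀ j, ‖ζ.2 j‖ ≤ ‖ζ‖ := fun j => (norm_le_pi_norm ζ.2 j).trans (norm_snd_le ζ)
  rw [kktOp_apply, Prod.norm_mk]
  refine max_le ?_ ((pi_norm_le_iff_of_nonneg (by positivity)).2 fun j => ?_)
  · calc ‖H ζ.1 - ∑ j, ζ.2 j • G j‖ ≤ ‖H‖ * ‖ζ.1‖ + ∑ j, ‖ζ.2 j‖ * ‖G j‖ := by
          refine (norm_sub_le _ _).trans (add_le_add (H.le_opNorm _) ?_)
          exact (norm_sum_le _ _).trans_eq (by simp only [norm_smul])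
      _ ≤ ‖H‖ * ‖ζ‖ + ∑ j, ‖ζ‖ * ‖G j‖ := by gcongr with j; exact h2 j
      _ = (‖H‖ + ∑ j, ‖G j‖) * ‖ζ‖ := by rw [← Finset.mul_sum]; ring
  · calc ‖⟪G j, ζ.1⟫‖ ≤ ‖G j‖ * ‖ζ‖ := (norm_inner_le_norm _ _).trans (by gcongr)
      _ ≤ (‖H‖ + ∑ j, ‖G j‖) * ‖ζ‖ := by
          gcongr
          exact (Finset.single_le_sum (fun j _ => norm_nonneg (G j)) (Finset.mem_univ j)).trans
            (le_add_of_nonneg_left (norm_nonneg H))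

theorem kktOp_injective {H : V →L[ℝ] V} {G : ι → V} (hG : LinearIndependent ℝ G)
    (hH : ∀ d ≠ 0, (∀ j, ⟪G j, d⟫ = 0) → 0 < ⟪H d, d⟫) :
    Function.Injective (kktOp H G) := by
  refine (injective_iff_map_eq_zero _).2 fun ⟨d, v⟩ hζ => ?_
  simp only [kktOp_apply, Prod.mk_eq_zero] at hζ
  obtain ⟨hstat, hcrit⟩ := hζ
  have hd : d = 0 := by
    by_contra hd
    have hHd : H d = ∑ j, v j • G j := sub_eq_zero.1 hstat
    have := hH d hd (congrFun hcrit)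
    simp [hHd, sum_inner, real_inner_smul_left, congrFun hcrit] at this
  subst hd
  have hv : v = 0 := funext (Fintype.linearIndependent_iff.1 hG v (by simpa using hstat))
  simp [hv]

end KKTOperator

section KKTMap

variable {V : Type*} [NormedAddCommGroup V] [InnerProductSpace ℝ V] [CompleteSpace V]
  {ι : Type*} [Fintype ι] {f : V → ℝ} {c : ι → V → ℝ}

noncomputable def kktMap (f : V → ℝ) (c : ι → V → ℝ) (z : V × (ι → ℝ)) : V × (ι → ℝ) :=
  (gradient (lagrangian f c z.2) z.1, fun j => c j z.1)

noncomputable def kktJacobian (f : V → ℝ) (c : ι → V → ℝ) (z : V × (ι → ℝ)) :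
    V × (ι → ℝ) →L[ℝ] V × (ι → ℝ) :=
  kktOp (hessian (lagrangian f c z.2) z.1) fun j => gradient (c j) z.1

theorem hasFDerivAt_kktMap (hf : ContDiff ℝ 2 f) (hc : ∀ j, ContDiff ℝ 2 (c j))
    (z : V × (ι → ℝ)) : HasFDerivAt (kktMap f c) (kktJacobian f c z) z := by
  let π₁ := fst ℝ V (ι → ℝ)
  have hgrad : ∀ {F : V → ℝ}, ContDiff ℝ 2 F →
      HasFDerivAt (fun z : V × (ι → ℝ) => gradient F z.1) ((hessian F z.1).comp π₁) z := fun hF =>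
    (hF.gradient.differentiable one_ne_zero z.1).hasFDerivAt.comp z hasFDerivAt_fst
  have hL : HasFDerivAt (fun z : V × (ι → ℝ) => gradient f z.1 - ∑ j, z.2 j • gradient (c j) z.1)
      ((hessian f z.1).comp π₁ - ∑ j, (z.2 j • (hessian (c j) z.1).comp π₁
        + ((proj j).comp (snd ℝ V (ι → ℝ))).smulRight (gradient (c j) z.1))) z :=
    (hgrad hf).sub (HasFDerivAt.fun_sum fun j _ =>
      ((proj j).comp (snd ℝ V (ι → ℝ))).hasFDerivAt.smul (hgrad (hc j)))
  have hcon : HasFDerivAt (fun z : V × (ι → ℝ) => fun j => c j z.1)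
      (pi fun j => (fderiv ℝ (c j) z.1).comp π₁) z :=
    hasFDerivAt_pi'' fun j =>
      ((hc j).differentiable two_ne_zero z.1).hasFDerivAt.comp z hasFDerivAt_fst
  have hmap : kktMap f c
      = fun z => (gradient f z.1 - ∑ j, z.2 j • gradient (c j) z.1, fun j => c j z.1) := by
    funext z
    simp [kktMap, gradient_lagrangian (hf.differentiable two_ne_zero)
      fun j => (hc j).differentiable two_ne_zero]
  rw [hmap]
  refine (hL.prodMk hcon).congr_fderiv (ContinuousLinearMap.ext fun ζ => ?_)
  simp [kktJacobian, π₁, hessian_lagrangian hf hc, Finset.sum_add_distrib, sub_sub]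

variable {x₀ : V} {w₀ : ι → ℝ}

theorem isBigO_hessian_lagrangian_sub (hf : ContDiff ℝ 2 f) (hc : ∀ j, ContDiff ℝ 2 (c j))
    (hfL : (fun x => hessian f x - hessian f x₀) =O[𝓝 x₀] (· - x₀))
    (hcL : ∀ j, (fun x => hessian (c j) x - hessian (c j) x₀) =O[𝓝 x₀] (· - x₀)) :
    (fun z : V × (ι → ℝ) => hessian (lagrangian f c z.2) z.1 - hessian (lagrangian f c w₀) x₀)
      =O[𝓝 (x₀, w₀)] (· - (x₀, w₀)) := by
  have hsplit : ∀ z : V × (ι → ℝ),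
      hessian (lagrangian f c z.2) z.1 - hessian (lagrangian f c w₀) x₀
        = (hessian f z.1 - hessian f x₀) - ∑ j, ((z.2 j - w₀ j) • hessian (c j) z.1
          + w₀ j • (hessian (c j) z.1 - hessian (c j) x₀)) := fun z => by
    simp only [hessian_lagrangian hf hc, sub_smul, smul_sub, Finset.sum_add_distrib,
      Finset.sum_sub_distrib]
    abel
  simp_rw [hsplit]
  refine (hfL.comp_fst_sub w₀).sub (IsBigO.fun_sum fun j _ => IsBigO.add ?_
    (((hcL j).comp_fst_sub w₀).const_smul_left (w₀ j)))
  have hw : (fun z : V × (ι → ℝ) => z.2 j - w₀ j) =O[𝓝 (x₀, w₀)] (fun z => ‖z - (x₀, w₀)‖) :=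
    IsBigO.of_bound 1 (Eventually.of_forall fun z => by
      simpa using (norm_le_pi_norm (z.2 - w₀) j).trans (norm_snd_le (z - (x₀, w₀))))
  have hbdd : (fun z : V × (ι → ℝ) => hessian (c j) z.1) =O[𝓝 (x₀, w₀)] (fun _ => (1 : ℝ)) :=
    ((hc j).continuous_hessian.tendsto x₀ |>.comp (continuous_fst.tendsto _)).isBigO_one ℝ
  simpa using hw.smul hbdd

theorem isBigO_kktJacobian_sub (hf : ContDiff ℝ 2 f) (hc : ∀ j, ContDiff ℝ 2 (c j))
    (hfL : (fun x => hessian f x - hessian f x₀) =O[𝓝 x₀] (· - x₀))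
    (hcL : ∀ j, (fun x => hessian (c j) x - hessian (c j) x₀) =O[𝓝 x₀] (· - x₀)) :
    (fun z => kktJacobian f c z - kktJacobian f c (x₀, w₀)) =O[𝓝 (x₀, w₀)] (· - (x₀, w₀)) := by
  have hgrad : ∀ j, (fun z : V × (ι → ℝ) => gradient (c j) z.1 - gradient (c j) x₀)
      =O[𝓝 (x₀, w₀)] (· - (x₀, w₀)) := fun j =>
    ((hc j).gradient.differentiable one_ne_zero x₀).hasFDerivAt.isBigO_sub.comp_fst_sub w₀
  have hbound : (fun z : V × (ι → ℝ) =>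
      ‖hessian (lagrangian f c z.2) z.1 - hessian (lagrangian f c w₀) x₀‖
        + ∑ j, ‖gradient (c j) z.1 - gradient (c j) x₀‖) =O[𝓝 (x₀, w₀)] (· - (x₀, w₀)) :=
    (isBigO_hessian_lagrangian_sub hf hc hfL hcL).norm_left.add
      (IsBigO.fun_sum fun j _ => (hgrad j).norm_left)
  refine IsBigO.trans (isBigO_of_le _ fun z => ?_) hbound
  rw [kktJacobian, kktJacobian, kktOp_sub, Real.norm_of_nonneg (by positivity)]
  exact norm_kktOp_le _ _

theorem isBigO_sqp_step [FiniteDimensional ℝ V] (hf : ContDiff ℝ 2 f)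
    (hc : ∀ j, ContDiff ℝ 2 (c j))
    (hfL : (fun x => hessian f x - hessian f x₀) =O[𝓝 x₀] (· - x₀))
    (hcL : ∀ j, (fun x => hessian (c j) x - hessian (c j) x₀) =O[𝓝 x₀] (· - x₀))
    (hc₀ : ∀ j, c j x₀ = 0) (hLI : LinearIndependent ℝ fun j => gradient (c j) x₀)
    (hstat : gradient f x₀ - ∑ j, w₀ j • gradient (c j) x₀ = 0)
    (hSOC : ∀ d ≠ 0, (∀ j, ⟪gradient (c j) x₀, d⟫ = 0) →
      0 < ⟪hessian (lagrangian f c w₀) x₀ d, d⟫)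
    {x d : ℕ → V} {w : ℕ → ι → ℝ} (hx : Tendsto x atTop (𝓝 x₀))
    (hw : (fun ℓ => w ℓ - w₀) =O[atTop] (fun ℓ => x ℓ - x₀))
    (hstep : ∀ ℓ, gradient f (x ℓ) + hessian (lagrangian f c (w ℓ)) (x ℓ) (d ℓ)
      - ∑ j, w (ℓ + 1) j • gradient (c j) (x ℓ) = 0)
    (hlin : ∀ ℓ j, c j (x ℓ) + ⟪gradient (c j) (x ℓ), d ℓ⟫ = 0) :
    (fun ℓ => x ℓ + d ℓ - x₀) =O[atTop] (fun ℓ => ‖x ℓ - x₀‖ ^ 2) := by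
  have hgradL := gradient_lagrangian (hf.differentiable two_ne_zero)
    fun j => (hc j).differentiable two_ne_zero
  have hz : (fun ℓ => (x ℓ, w ℓ) - (x₀, w₀)) =O[atTop] (fun ℓ => x ℓ - x₀) :=
    (isBigO_refl _ _).prod_left hw
  have hz_tendsto : Tendsto (fun ℓ => (x ℓ, w ℓ)) atTop (𝓝 (x₀, w₀)) :=
    tendsto_sub_nhds_zero_iff.1 (hz.trans_tendsto (tendsto_sub_nhds_zero_iff.2 hx))
  have hinv : (kktJacobian f c (x₀, w₀)).IsInvertible :=
    ⟨(LinearEquiv.ofInjectiveEndo _ (kktOp_injective hLI hSOC)).toContinuousLinearEquiv, rfl⟩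
  have hroot : kktMap f c (x₀, w₀) = 0 := Prod.ext (by simp [kktMap, hgradL, hstat]) (funext hc₀)
  have hnewton : ∀ ℓ, kktMap f c (x ℓ, w ℓ)
      + kktJacobian f c (x ℓ, w ℓ) (d ℓ, w (ℓ + 1) - w ℓ) = 0 := fun ℓ => by
    simp only [kktMap, kktJacobian, kktOp_apply, hgradL, Prod.mk_add_mk, Prod.mk_eq_zero,
      Pi.sub_apply, sub_smul, Finset.sum_sub_distrib]
    refine ⟨by rw [← hstep ℓ]; abel, funext fun j => hlin ℓ j⟩
  have hquad := isBigO_newton_step (.of_forall (hasFDerivAt_kktMap hf hc))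
    (isBigO_kktJacobian_sub hf hc hfL hcL) hinv hroot hz_tendsto hnewton
  exact (isBigO_fst_prod' (f' := fun ℓ => (x ℓ, w ℓ) + (d ℓ, w (ℓ + 1) - w ℓ) - (x₀, w₀))).trans
    (hquad.trans (hz.norm_norm.pow 2))

end KKTMap

section ActiveConstraints

variable {α β : Type*} (E : Finset α) (A : Finset β)

theorem norm_sumElim_sub_le [Fintype α] [Fintype β] (u u' : α → ℝ) (v v' : β → ℝ) :
    ‖(Sum.elim (fun i : E => u i) (fun i : A => v i)
      - Sum.elim (fun i : E => u' i) (fun i : A => v' i) : E ⊕ A → ℝ)‖ ≤ ‖u - u'‖ + ‖v - v'‖ := by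
  refine (pi_norm_le_iff_of_nonneg (by positivity)).2 ?_
  rintro (i | i)
  · exact (norm_le_pi_norm (u - u') i).trans (le_add_of_nonneg_right (norm_nonneg _))
  · exact (norm_le_pi_norm (v - v') i).trans (le_add_of_nonneg_left (norm_nonneg _))

variable {V : Type*} (h : α → V → ℝ) (g : β → V → ℝ) (u : α → ℝ) (v : β → ℝ)

theorem lagrangian_sumElim (f : V → ℝ) :
    lagrangian f (Sum.elim (fun i : E => h i) (fun i : A => g i))
      (Sum.elim (fun i : E => u i) (fun i : A => v i))
      = fun y => f y - ∑ i ∈ E, u i * h i y - ∑ i ∈ A, v i * g i y := by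
  funext y
  simp only [lagrangian, Fintype.sum_sum_type, Sum.elim_inl, Sum.elim_inr, sub_sub,
    ← Finset.sum_coe_sort E, ← Finset.sum_coe_sort A]

theorem sum_sumElim_smul_gradient [NormedAddCommGroup V] [InnerProductSpace ℝ V]
    [CompleteSpace V] (y : V) :
    ∑ j, Sum.elim (fun i : E => u i) (fun i : A => v i) j
        • gradient (Sum.elim (fun i : E => h i) (fun i : A => g i) j) y
      = ∑ i ∈ E, u i • gradient (h i) y + ∑ i ∈ A, v i • gradient (g i) y := by
  simp only [Fintype.sum_sum_type, Sum.elim_inl, Sum.elim_inr, ← Finset.sum_coe_sort E,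
    ← Finset.sum_coe_sort A]

end ActiveConstraints

theorem stmt19_general {n mE mI : ℕ}
    (f : EuclideanSpace ℝ (Fin n) → ℝ)
    (h : Fin mE → EuclideanSpace ℝ (Fin n) → ℝ)
    (g : Fin mI → EuclideanSpace ℝ (Fin n) → ℝ)
    (hf : ContDiff ℝ 2 f) (hh : ∀ i, ContDiff ℝ 2 (h i)) (hg : ∀ i, ContDiff ℝ 2 (g i))
    (xs : EuclideanSpace ℝ (Fin n))
    -- locally Lipschitz second derivatives near x*
    (hfL : ∃ U ∈ nhds xs, ∃ K : ℝ, ∀ a ∈ U, ∀ b ∈ U,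
      ‖iteratedFDeriv ℝ 2 f a - iteratedFDeriv ℝ 2 f b‖ ≤ K * ‖a - b‖)
    (hhL : ∀ i, ∃ U ∈ nhds xs, ∃ K : ℝ, ∀ a ∈ U, ∀ b ∈ U,
      ‖iteratedFDeriv ℝ 2 (h i) a - iteratedFDeriv ℝ 2 (h i) b‖ ≤ K * ‖a - b‖)
    (hgL : ∀ i, ∃ U ∈ nhds xs, ∃ K : ℝ, ∀ a ∈ U, ∀ b ∈ U,
      ‖iteratedFDeriv ℝ 2 (g i) a - iteratedFDeriv ℝ 2 (g i) b‖ ≤ K * ‖a - b‖)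
    (E : Finset (Fin mE)) (A : Finset (Fin mI))
    (hE : ∀ i ∈ E, h i xs = 0) (hA : ∀ i ∈ A, g i xs = 0)
    -- the active gradients are linearly independent
    (hLI : LinearIndependent ℝ
      (fun j : {i : Fin mE // i ∈ E} ⊕ {i : Fin mI // i ∈ A} =>
        Sum.elim (fun i => gradient (h i.1) xs) (fun i => gradient (g i.1) xs) j))
    (μstar : Fin mE → ℝ) (lamstar : Fin mI → ℝ)
    -- stationarity at (x*,μ*,λ*)
    (hstat : gradient f xs - (∑ i ∈ E, μstar i • gradient (h i) xs)
        - (∑ i ∈ A, lamstar i • gradient (g i) xs) = 0)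
    -- second-order condition: dᵀ∇²ₓₓL(x*,μ*,λ*)d ≥ γ‖d‖² on the critical subspace
    (γ : ℝ) (hγ : 0 < γ)
    (hSOC : ∀ d : EuclideanSpace ℝ (Fin n),
      (∀ i ∈ E, ⟪gradient (h i) xs, d⟫ = 0) →
      (∀ i ∈ A, ⟪gradient (g i) xs, d⟫ = 0) →
      γ * ‖d‖ ^ 2 ≤ iteratedFDeriv ℝ 2
        (fun x => f x - (∑ i ∈ E, μstar i * h i x) - (∑ i ∈ A, lamstar i * g i x))
        xs ![d, d])
    -- the sequences of the inner SQP iteration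
    (x d : ℕ → EuclideanSpace ℝ (Fin n))
    (μ : ℕ → Fin mE → ℝ) (lam : ℕ → Fin mI → ℝ)
    (hx : Tendsto x atTop (nhds xs))
    -- ‖μ_ℓ − μ*‖ + ‖λ_ℓ − λ*‖ = O(‖x_ℓ − x*‖)
    (hO : ∃ C : ℝ, ∀ᶠ ℓ in atTop,
      ‖μ ℓ - μstar‖ + ‖lam ℓ - lamstar‖ ≤ C * ‖x ℓ - xs‖)
    -- B_ℓ is the exact Lagrangian Hessian ∇²ₓₓL(x_ℓ,μ_ℓ,λ_ℓ)
    (B : ℕ → EuclideanSpace ℝ (Fin n) →L[ℝ] EuclideanSpace ℝ (Fin n))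
    (hB : ∀ ℓ, ∀ a b : EuclideanSpace ℝ (Fin n),
      ⟪B ℓ a, b⟫ = iteratedFDeriv ℝ 2
        (fun y => f y - (∑ i ∈ E, μ ℓ i * h i y) - (∑ i ∈ A, lam ℓ i * g i y))
        (x ℓ) ![a, b])
    -- KKT system of the SQP subproblem at each iteration
    (hstatℓ : ∀ ℓ, gradient f (x ℓ) + B ℓ (d ℓ)
        - (∑ i ∈ E, μ (ℓ + 1) i • gradient (h i) (x ℓ))
        - (∑ i ∈ A, lam (ℓ + 1) i • gradient (g i) (x ℓ)) = 0)
    (hlinE : ∀ ℓ, ∀ i ∈ E, h i (x ℓ) + ⟪gradient (h i) (x ℓ), d ℓ⟫ = 0)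
    (hlinA : ∀ ℓ, ∀ i ∈ A, g i (x ℓ) + ⟪gradient (g i) (x ℓ), d ℓ⟫ = 0) :
    ∃ M : ℝ, ∀ᶠ ℓ in atTop, ‖x ℓ + d ℓ - xs‖ ≤ M * ‖x ℓ - xs‖ ^ 2 := by
  set c : E ⊕ A → EuclideanSpace ℝ (Fin n) → ℝ := Sum.elim (fun i => h i) (fun i => g i)
  set mult : (Fin mE → ℝ) → (Fin mI → ℝ) → E ⊕ A → ℝ :=
    fun μ' lam' => Sum.elim (fun i => μ' i) (fun i => lam' i)
  have hLI' : LinearIndependent ℝ fun j => gradient (c j) xs := by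
    convert hLI using 1
    exact funext fun j => by cases j <;> rfl
  have hSOC' : ∀ d ≠ 0, (∀ j, ⟪gradient (c j) xs, d⟫ = 0) →
      0 < ⟪hessian (lagrangian f c (mult μstar lamstar)) xs d, d⟫ := fun d hd hcrit => by
    rw [inner_hessian_apply, lagrangian_sumElim]
    exact (by positivity : 0 < γ * ‖d‖ ^ 2).trans_le
      (hSOC d (fun i hi => hcrit (.inl ⟨i, hi⟩)) (fun i hi => hcrit (.inr ⟨i, hi⟩)))
  have hB' : ∀ ℓ, B ℓ = hessian (lagrangian f c (mult (μ ℓ) (lam ℓ))) (x ℓ) := fun ℓ =>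
    ext fun a => ext_inner_right ℝ fun b => by rw [hB, inner_hessian_apply, lagrangian_sumElim]
  obtain ⟨C, hC⟩ := hO
  have hmult : (fun ℓ => mult (μ ℓ) (lam ℓ) - mult μstar lamstar) =O[atTop] (x · - xs) :=
    IsBigO.of_bound C (hC.mono fun ℓ hℓ => (norm_sumElim_sub_le E A _ _ _ _).trans hℓ)
  obtain ⟨M, hM⟩ := (isBigO_sqp_step hf (Sum.rec (fun i => hh i) (fun i => hg i))
    (isBigO_hessian_sub_of_lipschitz hfL)
    (Sum.rec (fun i => isBigO_hessian_sub_of_lipschitz (hhL i))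
      (fun i => isBigO_hessian_sub_of_lipschitz (hgL i)))
    (Sum.rec (fun i => hE i i.2) (fun i => hA i i.2)) hLI'
    (by rw [sum_sumElim_smul_gradient, ← sub_sub, hstat]) hSOC' hx hmult
    (fun ℓ => by rw [← hB', sum_sumElim_smul_gradient, ← sub_sub, hstatℓ])
    (fun ℓ => Sum.rec (fun i => hlinE ℓ i i.2) (fun i => hlinA ℓ i i.2))).bound
  exact ⟨M, by simpa using hM⟩

/-- Quadratic SQP step: as in Statement 18 but with the exact
Lagrangian Hessians `B_ℓ = ∇²ₓₓL(x_ℓ,μ_ℓ,λ_ℓ)` and multiplier estimates with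
`‖μ_ℓ − μ*‖ + ‖λ_ℓ − λ*‖ = O(‖x_ℓ − x*‖)`; then
`‖x_ℓ + d_ℓ − x*‖ = O(‖x_ℓ − x*‖²)`. -/
theorem stmt19 {n mE mI : ℕ}
    (f : EuclideanSpace ℝ (Fin n) → ℝ)
    (h : Fin mE → EuclideanSpace ℝ (Fin n) → ℝ)
    (g : Fin mI → EuclideanSpace ℝ (Fin n) → ℝ)
    (hf : ContDiff ℝ 2 f) (hh : ∀ i, ContDiff ℝ 2 (h i)) (hg : ∀ i, ContDiff ℝ 2 (g i))
    (xs : EuclideanSpace ℝ (Fin n))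
    -- locally Lipschitz second derivatives near x*
    (hfL : ∃ U ∈ nhds xs, ∃ K : ℝ, ∀ a ∈ U, ∀ b ∈ U,
      ‖iteratedFDeriv ℝ 2 f a - iteratedFDeriv ℝ 2 f b‖ ≤ K * ‖a - b‖)
    (hhL : ∀ i, ∃ U ∈ nhds xs, ∃ K : ℝ, ∀ a ∈ U, ∀ b ∈ U,
      ‖iteratedFDeriv ℝ 2 (h i) a - iteratedFDeriv ℝ 2 (h i) b‖ ≤ K * ‖a - b‖)
    (hgL : ∀ i, ∃ U ∈ nhds xs, ∃ K : ℝ, ∀ a ∈ U, ∀ b ∈ U,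
      ‖iteratedFDeriv ℝ 2 (g i) a - iteratedFDeriv ℝ 2 (g i) b‖ ≤ K * ‖a - b‖)
    (E : Finset (Fin mE)) (A : Finset (Fin mI))
    (hE : ∀ i ∈ E, h i xs = 0) (hA : ∀ i ∈ A, g i xs = 0)
    -- the active gradients are linearly independent
    (hLI : LinearIndependent ℝ
      (fun j : {i : Fin mE // i ∈ E} ⊕ {i : Fin mI // i ∈ A} =>
        Sum.elim (fun i => gradient (h i.1) xs) (fun i => gradient (g i.1) xs) j))
    (μstar : Fin mE → ℝ) (lamstar : Fin mI → ℝ)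
    -- stationarity at (x*,μ*,λ*)
    (hstat : gradient f xs - (∑ i ∈ E, μstar i • gradient (h i) xs)
        - (∑ i ∈ A, lamstar i • gradient (g i) xs) = 0)
    -- second-order condition: dᵀ∇²ₓₓL(x*,μ*,λ*)d ≥ γ‖d‖² on the critical subspace
    (γ : ℝ) (hγ : 0 < γ)
    (hSOC : ∀ d : EuclideanSpace ℝ (Fin n),
      (∀ i ∈ E, ⟪gradient (h i) xs, d⟫ = 0) →
      (∀ i ∈ A, ⟪gradient (g i) xs, d⟫ = 0) →
      γ * ‖d‖ ^ 2 ≤ iteratedFDeriv ℝ 2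
        (fun x => f x - (∑ i ∈ E, μstar i * h i x) - (∑ i ∈ A, lamstar i * g i x))
        xs ![d, d])
    -- the sequences of the inner SQP iteration
    (x d : ℕ → EuclideanSpace ℝ (Fin n))
    (μ : ℕ → Fin mE → ℝ) (lam : ℕ → Fin mI → ℝ)
    (hx : Tendsto x atTop (nhds xs))
    (hμ : Tendsto μ atTop (nhds μstar)) (hlam : Tendsto lam atTop (nhds lamstar))
    -- ‖μ_ℓ − μ*‖ + ‖λ_ℓ − λ*‖ = O(‖x_ℓ − x*‖)
    (hO : ∃ C : ℝ, ∀ᶠ ℓ in atTop,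
      ‖μ ℓ - μstar‖ + ‖lam ℓ - lamstar‖ ≤ C * ‖x ℓ - xs‖)
    -- B_ℓ is the exact Lagrangian Hessian ∇²ₓₓL(x_ℓ,μ_ℓ,λ_ℓ)
    (B : ℕ → EuclideanSpace ℝ (Fin n) →L[ℝ] EuclideanSpace ℝ (Fin n))
    (hB : ∀ ℓ, ∀ a b : EuclideanSpace ℝ (Fin n),
      ⟪B ℓ a, b⟫ = iteratedFDeriv ℝ 2
        (fun y => f y - (∑ i ∈ E, μ ℓ i * h i y) - (∑ i ∈ A, lam ℓ i * g i y))
        (x ℓ) ![a, b])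
    -- KKT system of the SQP subproblem at each iteration
    (hstatℓ : ∀ ℓ, gradient f (x ℓ) + B ℓ (d ℓ)
        - (∑ i ∈ E, μ (ℓ + 1) i • gradient (h i) (x ℓ))
        - (∑ i ∈ A, lam (ℓ + 1) i • gradient (g i) (x ℓ)) = 0)
    (hlinE : ∀ ℓ, ∀ i ∈ E, h i (x ℓ) + ⟪gradient (h i) (x ℓ), d ℓ⟫ = 0)
    (hlinA : ∀ ℓ, ∀ i ∈ A, g i (x ℓ) + ⟪gradient (g i) (x ℓ), d ℓ⟫ = 0) :
    ∃ M : ℝ, ∀ᶠ ℓ in atTop, ‖x ℓ + d ℓ - xs‖ ≤ M * ‖x ℓ - xs‖ ^ 2 :=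
  stmt19_general f h g hf hh hg xs hfL hhL hgL E A hE hA hLI μstar lamstar hstat γ hγ hSOC x d μ lam
    hx hO B hB hstatℓ hlinE hlinA
end
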